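/- arXiv:2403.02842 — 9 statements merged into one kernel-verified Lean document; each statement's English description precedes it below -/
import Mathlib

section
/- Let p ∈ (1/2, 1) be a fixed constant. Suppose there exists a constant c > 0 such that for infinitely many n, with probability at least c the binomial random graph G(n,p) has the property that every orientation of it contains a Seymour vertex. Then every oriented graph contains a Seymour vertex. -/
open Filter

/-- The outneighbourhood `N1(v)` of `v` in the digraph with arc relation `D`. -/
def outNbr {V : Type*} (D : V → V → Prop) (v : V) : Set V := {w | w ≠ v ∧ D v w}

/-- The inneighbourhood `N⁻(v)` of `v`. -/
def inNbr {V : Type*} (D : V → V → Prop) (v : V) : Set V := {w | w ≠ v ∧ D w v}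

/-- The second outneighbourhood `N2(v)` of `v`. -/
def outNbr2 {V : Type*} (D : V → V → Prop) (v : V) : Set V :=
  {w | w ∉ insert v (outNbr D v) ∧ ∃ u ∈ outNbr D v, D u w}

/-- `v` is a Seymour vertex: `|N2(v)| ≥ |N1(v)|`. -/
def SeymourVertex {V : Type*} (D : V → V → Prop) (v : V) : Prop :=
  (outNbr D v).ncard ≤ (outNbr2 D v).ncard

/-- `v` is a Sullivan vertex: `|N2(v)| ≥ |N⁻(v)|`. -/
def SullivanVertex {V : Type*} (D : V → V → Prop) (v : V) : Prop :=
  (inNbr D v).ncard ≤ (outNbr2 D v).ncard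

/-- An oriented graph: an asymmetric (hence irreflexive and loopless) arc relation. -/
def OrientedGraph {V : Type*} (D : V → V → Prop) : Prop := ∀ u v, D u v → ¬ D v u

/-- `D` is an orientation of the simple graph `G`. -/
def Orients {V : Type*} (D : V → V → Prop) (G : SimpleGraph V) : Prop :=
  OrientedGraph D ∧ ∀ u v, G.Adj u v ↔ (D u v ∨ D v u)

/-- Strong connectivity of a digraph: every vertex reaches every other by a directed path. -/
def StrongConn {V : Type*} (D : V → V → Prop) : Prop := ∀ u v, Relation.ReflTransGen D u v

/-- The number of edges of `G` with one endpoint in `A` and the other in `B`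
(counted via ordered pairs; equals `e(A,B)` for disjoint `A`, `B`). -/
noncomputable def eBtw {V : Type*} (G : SimpleGraph V) (A B : Set V) : ℕ :=
  {p : V × V | p.1 ∈ A ∧ p.2 ∈ B ∧ G.Adj p.1 p.2}.ncard

/-- The number of edges of `G` with both endpoints in `A`. -/
noncomputable def eIn {V : Type*} (G : SimpleGraph V) (A : Set V) : ℕ :=
  {e | e ∈ G.edgeSet ∧ ∀ v ∈ e, v ∈ A}.ncard

open scoped Classical in
/-- The probability that the binomial random graph `G(n,p)` satisfies the property `P`. -/
noncomputable def gnpProb (n : ℕ) (p : ℝ) (P : SimpleGraph (Fin n) → Prop) : ℝ :=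
  ∑ G : SimpleGraph (Fin n),
    if P G then p ^ G.edgeSet.ncard * (1 - p) ^ (n.choose 2 - G.edgeSet.ncard) else 0

/-! Suppose an oriented graph `D₀` on `m` vertices has no Seymour vertex. Cut the vertex set of
`G(n,p)` into `n / m` blocks of `m` vertices. Each block independently induces a copy of the
underlying graph of `D₀` with probability at least `min(p, 1-p) ^ (m choose 2)`, so with high
probability one of them does. Since `p > 1/2`, a Chernoff bound on the `|X| |Xᶜ|` edges between
`X` and `Xᶜ`, summed over all proper nonempty `X`, shows that with high probability every such `X`
has a vertex outside it adjacent to more than half of `X`. In that event orient the copy as `D₀`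
and, starting from it, repeatedly add a vertex adjacent to more than half of the current set,
oriented towards that set: its second outneighbourhood lies in the current set minus its
outneighbourhood, so it is not a Seymour vertex, and the earlier vertices are unaffected. Hence
the probability that every orientation of `G(n,p)` has a Seymour vertex tends to `0`. -/

section Orientation

open Set

variable {V W : Type*}

lemma outNbr_map {f : W → V} (hf : Function.Injective f) (D : W → W → Prop) (a : W) :
    outNbr (Relation.Map D f f) (f a) = f '' outNbr D a := by
  ext w
  simp only [outNbr, mem_ofPred_eq, mem_image]
  constructor
  · rintro ⟨hne, b, c, hbc, hb, rfl⟩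
    obtain rfl := hf hb
    exact ⟨c, ⟨fun h => hne (congrArg f h), hbc⟩, rfl⟩
  · rintro ⟨b, ⟨hne, hab⟩, rfl⟩
    exact ⟨hf.ne hne, a, b, hab, rfl, rfl⟩

lemma outNbr2_map {f : W → V} (hf : Function.Injective f) (D : W → W → Prop) (a : W) :
    outNbr2 (Relation.Map D f f) (f a) = f '' outNbr2 D a := by
  ext w
  simp only [outNbr2, outNbr_map hf, ← image_insert_eq, mem_ofPred_eq, mem_image,
    exists_exists_and_eq_and]
  constructor
  · rintro ⟨hw, b, hb, c, d, hcd, hc, rfl⟩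
    obtain rfl := hf hc
    exact ⟨d, ⟨fun h => hw ⟨d, h, rfl⟩, c, hb, hcd⟩, rfl⟩
  · rintro ⟨d, ⟨hd, c, hc, hcd⟩, rfl⟩
    refine ⟨?_, c, hc, c, d, hcd, rfl, rfl⟩
    rintro ⟨d', hd', hdd'⟩
    exact hd (hf hdd' ▸ hd')

lemma seymourVertex_map_iff {f : W → V} (hf : Function.Injective f) (D : W → W → Prop)
    (a : W) : SeymourVertex (Relation.Map D f f) (f a) ↔ SeymourVertex D a := by
  rw [SeymourVertex, SeymourVertex, outNbr_map hf, outNbr2_map hf,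
    ncard_image_of_injective _ hf, ncard_image_of_injective _ hf]

lemma seymourVertex_congr {D D' : V → V → Prop} {x : V}
    (h : ∀ u, u = x ∨ D x u → ∀ w, D' u w ↔ D u w) :
    SeymourVertex D' x ↔ SeymourVertex D x := by
  have h1 : outNbr D' x = outNbr D x := by
    ext w
    simp only [outNbr, mem_ofPred_eq, h x (Or.inl rfl)]
  have h2 : outNbr2 D' x = outNbr2 D x := by
    ext w
    simp only [outNbr2, h1, mem_ofPred_eq]
    refine and_congr_right fun _ => exists_congr fun u => and_congr_right fun hu => ?_
    exact h u (Or.inr hu.2) w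
  rw [SeymourVertex, SeymourVertex, h1, h2]

lemma not_seymourVertex_of_outNbr2_subset [Finite V] {D : V → V → Prop} {v : V} {X : Set V}
    (h1 : outNbr D v ⊆ X) (h2 : outNbr2 D v ⊆ X \ outNbr D v)
    (hX : X.ncard < 2 * (outNbr D v).ncard) : ¬ SeymourVertex D v := by
  have := (ncard_le_ncard h2).trans_eq (ncard_sdiff h1)
  have := ncard_le_ncard h1
  rw [SeymourVertex]
  omega

structure IsSeymourFreeOrientationOn (G : SimpleGraph V) (X : Set V) (D : V → V → Prop) :
    Prop where
  oriented : OrientedGraph D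
  mem_of_arc : ∀ ⦃u w⦄, D u w → u ∈ X ∧ w ∈ X
  adj_iff : ∀ u ∈ X, ∀ w ∈ X, G.Adj u w ↔ D u w ∨ D w u
  not_seymourVertex : ∀ v ∈ X, ¬ SeymourVertex D v

namespace IsSeymourFreeOrientationOn

variable {G : SimpleGraph V} {X : Set V} {D : V → V → Prop}

lemma of_embedding {D₀ : W → W → Prop} (hD₀ : OrientedGraph D₀)
    (hno : ∀ a, ¬ SeymourVertex D₀ a) (φ : SimpleGraph.fromRel D₀ ↪g G) :
    IsSeymourFreeOrientationOn G (range φ) (Relation.Map D₀ φ φ) where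
  oriented := by
    rintro _ _ ⟨a, b, hab, rfl, rfl⟩ hba
    rw [Relation.map_apply_apply φ.injective φ.injective] at hba
    exact hD₀ a b hab hba
  mem_of_arc := by
    rintro _ _ ⟨a, b, -, rfl, rfl⟩
    exact ⟨mem_range_self a, mem_range_self b⟩
  adj_iff := by
    rintro _ ⟨a, rfl⟩ _ ⟨b, rfl⟩
    rw [φ.map_adj_iff, SimpleGraph.fromRel_adj, Relation.map_apply_apply φ.injective φ.injective,
      Relation.map_apply_apply φ.injective φ.injective, and_iff_right_iff_imp]
    rintro (h | h) rfl <;> exact hD₀ a a h h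
  not_seymourVertex := by
    rintro _ ⟨a, rfl⟩
    rw [seymourVertex_map_iff φ.injective]
    exact hno a

/-- The vertices of `X` keep their first and second outneighbourhoods, which lie in `X`; the
second outneighbourhood of `v` lies in `X` minus its outneighbourhood. -/
lemma insert [Finite V] (h : IsSeymourFreeOrientationOn G X D) {v : V} (hv : v ∉ X)
    (hcut : X.ncard < 2 * (X ∩ G.neighborSet v).ncard) :
    IsSeymourFreeOrientationOn G (insert v X)
      (fun a b => D a b ∨ a = v ∧ b ∈ X ∧ G.Adj v b) := by
  have hDv : ∀ w, ¬ D v w := fun w hw => hv (h.mem_of_arc hw).1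
  have hN1 :
      outNbr (fun a b => D a b ∨ a = v ∧ b ∈ X ∧ G.Adj v b) v = X ∩ G.neighborSet v := by
    ext w
    simp only [outNbr, mem_ofPred_eq, mem_inter_iff, SimpleGraph.mem_neighborSet, hDv, true_and,
      false_or]
    exact ⟨And.right, fun hw => ⟨hw.2.ne', hw⟩⟩
  refine ⟨?_, ?_, ?_, ?_⟩
  · rintro a b (hab | ⟨rfl, hb, -⟩) (hba | ⟨rfl, ha, -⟩)
    · exact h.oriented a b hab hba
    · exact hv (h.mem_of_arc hab).2
    · exact hv (h.mem_of_arc hba).2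
    · exact hv ha
  · rintro a b (hab | ⟨rfl, hb, -⟩)
    · exact (h.mem_of_arc hab).imp (mem_insert_of_mem v) (mem_insert_of_mem v)
    · exact ⟨mem_insert a X, mem_insert_of_mem a hb⟩
  · rintro a (rfl | ha) b (rfl | hb)
    · simp [hDv]
    · have : ¬ D b a := fun h' => hv (h.mem_of_arc h').2
      simp [hDv, hb, this]
    · have : ¬ D a b := fun h' => hv (h.mem_of_arc h').2
      simp [hDv, ha, this, SimpleGraph.adj_comm]
    · simp [h.adj_iff a ha b hb, ha.ne_of_notMem hv, hb.ne_of_notMem hv]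
  · rintro x (rfl | hx)
    · refine not_seymourVertex_of_outNbr2_subset (X := X) (hN1 ▸ inter_subset_left) ?_
        (hN1 ▸ hcut)
      rintro w ⟨hw, u, hu, hD | ⟨rfl, hwX, -⟩⟩
      · exact ⟨(h.mem_of_arc hD).2, fun hw' => hw (mem_insert_of_mem _ hw')⟩
      · exact absurd rfl hu.1
    · rw [seymourVertex_congr]
      · exact h.not_seymourVertex x hx
      rintro u hu w
      have hu : u ∈ X := by
        rcases hu with rfl | hxu
        · exact hx
        · exact (h.mem_of_arc hxu).2
      simp [hu.ne_of_notMem hv]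

end IsSeymourFreeOrientationOn

theorem exists_orients_forall_not_seymourVertex [Finite V] {G : SimpleGraph V}
    {D₀ : W → W → Prop} (hD₀ : OrientedGraph D₀) (hno : ∀ a, ¬ SeymourVertex D₀ a)
    (φ : SimpleGraph.fromRel D₀ ↪g G)
    (hcut : ∀ X : Set V, range φ ⊆ X → X ≠ univ →
      ∃ v ∉ X, X.ncard < 2 * (X ∩ G.neighborSet v).ncard) :
    ∃ D, Orients D G ∧ ∀ v, ¬ SeymourVertex D v := by
  obtain ⟨-, D, hD⟩ := Set.Finite.induction_to_univ
    (C := fun X => range φ ⊆ X ∧ ∃ D, IsSeymourFreeOrientationOn G X D) (range φ)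
    ⟨subset_rfl, _, .of_embedding hD₀ hno φ⟩ fun X hX ⟨hφX, D, hD⟩ => by
      obtain ⟨v, hv, hvX⟩ := hcut X hφX hX
      exact ⟨v, hv, hφX.trans (subset_insert v X), _, hD.insert hv hvX⟩
  exact ⟨D, ⟨hD.oriented, fun u w => hD.adj_iff u trivial w trivial⟩,
    fun v => hD.not_seymourVertex v trivial⟩

end Orientation

section BernoulliSubset

open Finset

variable {ι : Type*} {p : ℝ}

def bernoulliWeight (p : ℝ) (U S : Finset ι) : ℝ := p ^ #S * (1 - p) ^ (#U - #S)

/-- The probability that a random subset of `U`, containing each element independently with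
probability `p`, satisfies `P`. -/
noncomputable def bernoulliProb (p : ℝ) (U : Finset ι) (P : Finset ι → Prop) : ℝ :=
  ∑ S ∈ U.powerset, {S | P S}.indicator (bernoulliWeight p U) S

lemma bernoulliWeight_nonneg (hp0 : 0 ≤ p) (hp1 : p ≤ 1) (U S : Finset ι) :
    0 ≤ bernoulliWeight p U S := by
  have : 0 ≤ 1 - p := by linarith
  unfold bernoulliWeight
  positivity

lemma min_pow_card_le_bernoulliWeight (hp0 : 0 ≤ p) (hp1 : p ≤ 1) {U S : Finset ι}
    (hS : S ⊆ U) : min p (1 - p) ^ #U ≤ bernoulliWeight p U S := by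
  have hmin : 0 ≤ min p (1 - p) := le_min hp0 (by linarith)
  calc min p (1 - p) ^ #U = min p (1 - p) ^ #S * min p (1 - p) ^ (#U - #S) := by
        rw [← pow_add, Nat.add_sub_cancel' (card_le_card hS)]
    _ ≤ bernoulliWeight p U S := by
        unfold bernoulliWeight
        gcongr
        exacts [min_le_left _ _, min_le_right _ _]

lemma bernoulliWeight_eq_inter_mul_sdiff [DecidableEq ι] (U : Finset ι) {A S : Finset ι}
    (hA : A ⊆ U) (hS : S ⊆ U) :
    bernoulliWeight p U S = bernoulliWeight p A (S ∩ A) * bernoulliWeight p (U \ A) (S \ A) := by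
  have h1 := card_inter_add_card_sdiff S A
  have h2 := card_sdiff_add_card_eq_card hA
  have h3 : #(S ∩ A) ≤ #A := card_le_card inter_subset_right
  have h4 : #(S \ A) ≤ #(U \ A) := card_le_card (sdiff_subset_sdiff hS subset_rfl)
  have h5 : #U - #S = (#A - #(S ∩ A)) + (#(U \ A) - #(S \ A)) := by omega
  rw [bernoulliWeight, bernoulliWeight, bernoulliWeight, h5, ← h1, pow_add, pow_add]
  ring

variable {U : Finset ι} {P Q : Finset ι → Prop}

lemma bernoulliProb_nonneg (hp0 : 0 ≤ p) (hp1 : p ≤ 1) (U : Finset ι)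
    (P : Finset ι → Prop) :
    0 ≤ bernoulliProb p U P :=
  sum_nonneg fun S _ => Set.indicator_nonneg (fun S _ => bernoulliWeight_nonneg hp0 hp1 U S) S

lemma bernoulliProb_mono (hp0 : 0 ≤ p) (hp1 : p ≤ 1) (h : ∀ S ⊆ U, P S → Q S) :
    bernoulliProb p U P ≤ bernoulliProb p U Q := by
  classical
  refine sum_le_sum fun S hS => ?_
  simp only [Set.indicator_apply, Set.mem_ofPred_eq]
  split_ifs with hP hQ hQ
  exacts [le_rfl, absurd (h S (mem_powerset.mp hS) hP) hQ,
    bernoulliWeight_nonneg hp0 hp1 U S, le_rfl]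

lemma bernoulliProb_congr (h : ∀ S ⊆ U, (P S ↔ Q S)) :
    bernoulliProb p U P = bernoulliProb p U Q := by
  classical
  refine sum_congr rfl fun S hS => ?_
  simp only [Set.indicator_apply, Set.mem_ofPred_eq, h S (mem_powerset.mp hS)]

lemma bernoulliProb_true (p : ℝ) (U : Finset ι) : bernoulliProb p U (fun _ => True) = 1 := by
  simp [bernoulliProb, bernoulliWeight, sum_pow_mul_eq_add_pow]

lemma bernoulliProb_le_one (hp0 : 0 ≤ p) (hp1 : p ≤ 1) (U : Finset ι)
    (P : Finset ι → Prop) :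
    bernoulliProb p U P ≤ 1 :=
  (bernoulliProb_mono hp0 hp1 fun _ _ _ => trivial).trans_eq (bernoulliProb_true p U)

lemma bernoulliProb_or_le (hp0 : 0 ≤ p) (hp1 : p ≤ 1) (U : Finset ι)
    (P Q : Finset ι → Prop) :
    bernoulliProb p U (fun S => P S ∨ Q S) ≤ bernoulliProb p U P + bernoulliProb p U Q := by
  classical
  rw [bernoulliProb, bernoulliProb, bernoulliProb, ← sum_add_distrib]
  refine sum_le_sum fun S _ => ?_
  have := bernoulliWeight_nonneg hp0 hp1 U S
  simp only [Set.indicator_apply, Set.mem_ofPred_eq]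
  split_ifs <;> simp_all

lemma bernoulliProb_exists_le (hp0 : 0 ≤ p) (hp1 : p ≤ 1) (U : Finset ι) {κ : Type*}
    (T : Finset κ) (P : κ → Finset ι → Prop) :
    bernoulliProb p U (fun S => ∃ x ∈ T, P x S) ≤ ∑ x ∈ T, bernoulliProb p U (P x) := by
  classical
  induction T using Finset.induction_on with
  | empty => simp [bernoulliProb]
  | insert a T haT ih =>
    rw [sum_insert haT]
    refine (bernoulliProb_congr fun S _ => ?_).trans_le
      ((bernoulliProb_or_le hp0 hp1 U _ _).trans (add_le_add_right ih _))
    simp only [mem_insert, exists_eq_or_imp]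

lemma bernoulliProb_inter_and_sdiff [DecidableEq ι] {A : Finset ι} (hA : A ⊆ U)
    (φ ψ : Finset ι → Prop) :
    bernoulliProb p U (fun S => φ (S ∩ A) ∧ ψ (S \ A)) =
      bernoulliProb p A φ * bernoulliProb p (U \ A) ψ := by
  classical
  rw [bernoulliProb, bernoulliProb, bernoulliProb, sum_mul_sum, ← sum_product']
  refine sum_nbij' (fun S => (S ∩ A, S \ A)) (fun T => T.1 ∪ T.2) ?_ ?_ ?_ ?_ ?_
  · intro S hS
    simp only [mem_powerset, mem_product] at hS ⊢
    exact ⟨inter_subset_right, sdiff_subset_sdiff hS subset_rfl⟩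
  · rintro ⟨T₁, T₂⟩ hT
    simp only [mem_powerset, mem_product] at hT ⊢
    exact union_subset (hT.1.trans hA) (hT.2.trans sdiff_subset)
  · intro S _
    exact union_comm _ _ |>.trans (sdiff_union_inter S A)
  · rintro ⟨T₁, T₂⟩ hT
    simp only [mem_powerset, mem_product] at hT
    ext x <;> have := @hT.1 x <;> have := @hT.2 x <;>
      simp only [Finset.mem_inter, Finset.mem_union, Finset.mem_sdiff] at * <;> tauto
  · intro S hS
    simp only [Set.indicator_apply, Set.mem_ofPred_eq]
    rw [bernoulliWeight_eq_inter_mul_sdiff U hA (mem_powerset.mp hS)]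
    split_ifs <;> simp_all

lemma bernoulliProb_inter [DecidableEq ι] {A : Finset ι} (hA : A ⊆ U)
    (φ : Finset ι → Prop) :
    bernoulliProb p U (fun S => φ (S ∩ A)) = bernoulliProb p A φ := by
  simpa [bernoulliProb_true] using bernoulliProb_inter_and_sdiff (p := p) hA φ (fun _ => True)

lemma bernoulliProb_ne [DecidableEq ι] {A T : Finset ι} (hT : T ⊆ A) :
    bernoulliProb p A (· ≠ T) = 1 - bernoulliWeight p A T := by
  have h1 := bernoulliProb_true p A
  simp only [bernoulliProb, Set.ofPred_true, Set.indicator_univ] at h1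
  rw [← add_sum_erase _ _ (mem_powerset.mpr hT)] at h1
  rw [bernoulliProb, ← add_sum_erase _ _ (mem_powerset.mpr hT), Set.indicator_of_notMem (by simp),
    zero_add, ← h1, add_sub_cancel_left]
  exact sum_congr rfl fun S hS => Set.indicator_of_mem (ne_of_mem_erase hS) _

lemma bernoulliProb_forall_inter_ne_le [DecidableEq ι] (hp0 : 0 ≤ p) (hp1 : p ≤ 1) {κ : Type*}
    {A T : κ → Finset ι} {q : ℝ} (hT : ∀ k, T k ⊆ A k)
    (hq : ∀ k, q ≤ bernoulliWeight p (A k) (T k)) (K : Finset κ)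
    (hK : (K : Set κ).PairwiseDisjoint A) (U : Finset ι) (hAU : ∀ k ∈ K, A k ⊆ U) :
    bernoulliProb p U (fun S => ∀ k ∈ K, S ∩ A k ≠ T k) ≤ (1 - q) ^ #K := by
  classical
  induction K using Finset.induction_on generalizing U with
  | empty => simpa using bernoulliProb_le_one hp0 hp1 U _
  | insert a K haK ih =>
    have hdisj : ∀ k ∈ K, Disjoint (A a) (A k) := fun k hk =>
      hK (mem_insert_self a K) (mem_insert_of_mem hk) (ne_of_mem_of_not_mem hk haK).symm
    have hsplit : bernoulliProb p U (fun S => ∀ k ∈ insert a K, S ∩ A k ≠ T k) =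
        bernoulliProb p U
          (fun S => S ∩ A a ≠ T a ∧ ∀ k ∈ K, (S \ A a) ∩ A k ≠ T k) := by
      refine bernoulliProb_congr fun S _ => ?_
      rw [Finset.forall_mem_insert]
      refine and_congr_right fun _ => forall₂_congr fun k hk => ?_
      rw [sdiff_inter_right_comm, sdiff_eq_self_of_disjoint
        ((hdisj k hk).symm.mono_left inter_subset_right)]
    have hw : 0 ≤ 1 - bernoulliWeight p (A a) (T a) :=
      bernoulliProb_ne (hT a) ▸ bernoulliProb_nonneg hp0 hp1 _ _
    rw [hsplit, bernoulliProb_inter_and_sdiff (hAU a (mem_insert_self a K)) (· ≠ T a)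
      (fun S => ∀ k ∈ K, S ∩ A k ≠ T k), bernoulliProb_ne (hT a), card_insert_of_notMem haK,
      pow_succ']
    refine mul_le_mul (by linarith [hq a]) (ih (hK.subset (by simp)) _ fun k hk => ?_)
      (bernoulliProb_nonneg hp0 hp1 _ _) (by linarith [hq a])
    exact subset_sdiff.mpr ⟨hAU k (mem_insert_of_mem hk), (hdisj k hk).symm⟩

lemma pow_mul_one_sub_pow_le_sqrt_pow (hp : 1 / 2 ≤ p) (hp1 : p ≤ 1) {t a : ℕ}
    (h : 2 * t ≤ a) : p ^ t * (1 - p) ^ (a - t) ≤ √(p * (1 - p)) ^ a := by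
  have hq : 0 ≤ 1 - p := by linarith
  have hs : 1 - p ≤ √(p * (1 - p)) := Real.le_sqrt_of_sq_le (by nlinarith)
  have hsq : √(p * (1 - p)) ^ 2 = p * (1 - p) := Real.sq_sqrt (by positivity)
  calc p ^ t * (1 - p) ^ (a - t) = (p * (1 - p)) ^ t * (1 - p) ^ (a - 2 * t) := by
        rw [show a - t = t + (a - 2 * t) by omega, pow_add, mul_pow]; ring
    _ ≤ (p * (1 - p)) ^ t * √(p * (1 - p)) ^ (a - 2 * t) := by gcongr
    _ = √(p * (1 - p)) ^ (2 * t) * √(p * (1 - p)) ^ (a - 2 * t) := by rw [pow_mul, hsq]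
    _ = √(p * (1 - p)) ^ a := by rw [← pow_add]; congr 1; omega

/-- Each of the at most `2 ^ #A` traces `S ∩ A` with `2 * #(S ∩ A) ≤ #A` has probability at
most `√(p(1-p)) ^ #A`. -/
lemma bernoulliProb_two_mul_card_inter_le [DecidableEq ι] (hp : 1 / 2 ≤ p) (hp1 : p ≤ 1)
    {A : Finset ι} (hA : A ⊆ U) :
    bernoulliProb p U (fun S => 2 * #(S ∩ A) ≤ #A) ≤ (2 * √(p * (1 - p))) ^ #A := by
  rw [bernoulliProb_inter hA (fun T => 2 * #T ≤ #A), bernoulliProb]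
  classical
  calc _ ≤ ∑ T ∈ A.powerset, √(p * (1 - p)) ^ #A := sum_le_sum fun T _ => by
        simp only [Set.indicator_apply, Set.mem_ofPred_eq]
        split_ifs with hT
        exacts [pow_mul_one_sub_pow_le_sqrt_pow hp hp1 hT, by positivity]
    _ = (2 * √(p * (1 - p))) ^ #A := by
        rw [sum_const, card_powerset, nsmul_eq_mul, mul_pow]; push_cast; ring

end BernoulliSubset

section RandomGraph

open Finset SimpleGraph

lemma gnpProb_eq_bernoulliProb (n : ℕ) (p : ℝ) (P : SimpleGraph (Fin n) → Prop) :
    gnpProb n p P =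
      bernoulliProb p (⊤ : SimpleGraph (Fin n)).edgeFinset (fun S => P (fromEdgeSet S)) := by
  classical
  refine sum_nbij' (fun G => G.edgeFinset) (fun S => fromEdgeSet S) (fun G _ => ?_)
    (fun _ _ => mem_univ _) (fun G _ => ?_) (fun S hS => ?_) (fun G _ => ?_)
  · exact mem_powerset.mpr (edgeFinset_mono le_top)
  · simp only [coe_edgeFinset, fromEdgeSet_edgeSet]
  · refine coe_injective ?_
    have hS : (S : Set (Sym2 (Fin n))) ⊆ Sym2.diagSetᶜ := by
      rw [← edgeSet_top, ← coe_edgeFinset]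
      exact coe_subset.mpr (mem_powerset.mp hS)
    rw [coe_edgeFinset, edgeSet_fromEdgeSet, sdiff_eq_left]
    exact Set.subset_compl_iff_disjoint_right.mp hS
  · simp only [Set.indicator_apply, Set.mem_ofPred_eq, coe_edgeFinset, fromEdgeSet_edgeSet,
      bernoulliWeight]
    rw [card_edgeFinset_top_eq_card_choose_two, Fintype.card_fin, ← Set.ncard_coe_finset,
      coe_edgeFinset]

variable {V W K : Type*}

lemma fromEdgeSet_adj_iff_of_inter_eq [Fintype W] [DecidableEq W] [DecidableEq V]
    {H : SimpleGraph W} [Fintype H.edgeSet] (f : W ↪ V) {S : Finset (Sym2 V)}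
    (hS : S ∩ (⊤ : SimpleGraph W).edgeFinset.map f.sym2Map = H.edgeFinset.map f.sym2Map)
    (a b : W) : (fromEdgeSet (S : Set (Sym2 V))).Adj (f a) (f b) ↔ H.Adj a b := by
  obtain rfl | hab := eq_or_ne a b
  · simp
  have hmem : s(f a, f b) = f.sym2Map s(a, b) := by simp
  have htop : f.sym2Map s(a, b) ∈ (⊤ : SimpleGraph W).edgeFinset.map f.sym2Map :=
    mem_map_of_mem _ (by simpa using hab)
  calc (fromEdgeSet (S : Set (Sym2 V))).Adj (f a) (f b)
      ↔ f.sym2Map s(a, b) ∈ S ∩ (⊤ : SimpleGraph W).edgeFinset.map f.sym2Map := by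
        rw [fromEdgeSet_adj, mem_coe, and_iff_left (f.injective.ne hab), hmem, mem_inter,
          and_iff_left htop]
    _ ↔ H.Adj a b := by rw [hS, Finset.mem_map', mem_edgeFinset, mem_edgeSet]

def rowEmbedding (e : K × W ↪ V) (k : K) : W ↪ V := (Function.Embedding.sectR k W).trans e

lemma disjoint_map_sym2Map_rowEmbedding (e : K × W ↪ V) {k l : K} (hkl : k ≠ l)
    (s t : Finset (Sym2 W)) :
    Disjoint (s.map (rowEmbedding e k).sym2Map) (t.map (rowEmbedding e l).sym2Map) := by
  refine disjoint_left.mpr fun z hz hz' => hkl ?_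
  obtain ⟨x, -, rfl⟩ := mem_map.mp hz
  obtain ⟨y, -, hyx⟩ := mem_map.mp hz'
  induction x using Sym2.ind with
  | h a a' =>
    have : e (k, a) ∈ Sym2.map (rowEmbedding e l) y := by
      rw [← Function.Embedding.sym2Map_apply, hyx]; simp [rowEmbedding]
    obtain ⟨b, -, hb⟩ := Sym2.mem_map.mp this
    exact (Prod.ext_iff.mp (e.injective hb)).1.symm

lemma ncard_inter_neighborSet_fromEdgeSet [DecidableEq V] (S : Finset (Sym2 V))
    {X : Finset V} {v : V} (hv : v ∉ X) :
    (↑X ∩ (fromEdgeSet (S : Set (Sym2 V))).neighborSet v).ncard =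
      #{w ∈ X | s(v, w) ∈ S} := by
  rw [← Set.ncard_coe_finset, coe_filter]
  congr 1
  ext w
  simp only [Set.mem_inter_iff, mem_coe, mem_neighborSet, fromEdgeSet_adj, Set.mem_ofPred_eq]
  exact ⟨fun h => ⟨h.1, h.2.1⟩, fun h => ⟨h.1, h.2, fun hvw => hv (hvw ▸ h.1)⟩⟩

variable [Fintype V] [DecidableEq V]

lemma map_sym2Map_edgeFinset_subset (f : W ↪ V) (H : SimpleGraph W) [Fintype H.edgeSet] :
    H.edgeFinset.map f.sym2Map ⊆ (⊤ : SimpleGraph V).edgeFinset := by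
  intro z hz
  obtain ⟨x, hx, rfl⟩ := mem_map.mp hz
  have := H.not_isDiag_of_mem_edgeSet (mem_edgeFinset.mp hx)
  simpa [edgeSet_top, Sym2.isDiag_map f.injective] using this

def cutEdges (X : Finset V) : Finset (Sym2 V) := (Xᶜ ×ˢ X).image fun x => s(x.1, x.2)

lemma injOn_sym2Mk_compl_product (X : Finset V) :
    Set.InjOn (fun x : V × V => s(x.1, x.2)) ↑(Xᶜ ×ˢ X) := by
  rintro ⟨a, b⟩ hab ⟨c, d⟩ hcd h
  simp only [coe_product, coe_compl, Set.mem_prod, Set.mem_compl_iff, mem_coe] at hab hcd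
  simp only at h
  rcases Sym2.eq_iff.mp h with ⟨rfl, rfl⟩ | ⟨rfl, rfl⟩
  · rfl
  · exact absurd hcd.2 hab.1

lemma cutEdges_subset (X : Finset V) : cutEdges X ⊆ (⊤ : SimpleGraph V).edgeFinset := by
  intro z hz
  obtain ⟨⟨a, b⟩, hab, rfl⟩ := mem_image.mp hz
  simp only [mem_product, mem_compl] at hab
  simpa using fun h : a = b => hab.1 (h ▸ hab.2)

lemma card_cutEdges (X : Finset V) : #(cutEdges X) = #Xᶜ * #X := by
  rw [cutEdges, card_image_of_injOn (injOn_sym2Mk_compl_product X), card_product]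

lemma card_inter_cutEdges (S : Finset (Sym2 V)) (X : Finset V) :
    #(S ∩ cutEdges X) = ∑ v ∈ Xᶜ, #{w ∈ X | s(v, w) ∈ S} := by
  rw [cutEdges, inter_comm, ← filter_mem_eq_inter, filter_image, card_image_of_injOn
    ((injOn_sym2Mk_compl_product X).mono (filter_subset _ _)), card_filter, sum_product]
  simp only [card_filter]

end RandomGraph

section SeymourInRandomGraph

open Finset SimpleGraph

variable {V W K : Type*} [Fintype V] [DecidableEq V] [Fintype W] [DecidableEq W]
  {D₀ : W → W → Prop}

open scoped Classical in
lemma forall_inter_ne_or_exists_cut [Nonempty W] (hD₀ : OrientedGraph D₀)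
    (hno : ∀ a, ¬ SeymourVertex D₀ a) (e : K × W ↪ V) {S : Finset (Sym2 V)}
    (hS : ∀ D, Orients D (fromEdgeSet (S : Set (Sym2 V))) → ∃ v, SeymourVertex D v) :
    (∀ k, S ∩ (⊤ : SimpleGraph W).edgeFinset.map (rowEmbedding e k).sym2Map ≠
        (fromRel D₀).edgeFinset.map (rowEmbedding e k).sym2Map) ∨
      ∃ X ∈ (univ : Finset (Finset V)).filter (fun X => X.Nonempty ∧ X ≠ univ),
        ∀ v ∈ Xᶜ, 2 * #{w ∈ X | s(v, w) ∈ S} ≤ #X := by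
  by_contra! h
  obtain ⟨⟨k, hk⟩, hcut⟩ := h
  let φ : fromRel D₀ ↪g fromEdgeSet (S : Set (Sym2 V)) :=
    ⟨rowEmbedding e k, fromEdgeSet_adj_iff_of_inter_eq _ hk _ _⟩
  obtain ⟨D, hD, hDno⟩ := exists_orients_forall_not_seymourVertex hD₀ hno φ
      fun X hφX hX => by
    obtain ⟨a⟩ := ‹Nonempty W›
    obtain ⟨v, hv, hvX⟩ := hcut X.toFinset (by
      simp only [mem_filter, mem_univ, true_and, ne_eq, Set.toFinset_eq_univ]
      exact ⟨⟨φ a, Set.mem_toFinset.mpr (hφX ⟨a, rfl⟩)⟩, hX⟩)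
    refine ⟨v, by simpa using hv, ?_⟩
    rwa [← ncard_inter_neighborSet_fromEdgeSet S (by simpa using hv), Set.coe_toFinset,
      ← Set.ncard_eq_toFinset_card'] at hvX
  obtain ⟨v, hv⟩ := hS D hD
  exact hDno v hv

open scoped Classical in
theorem bernoulliProb_forall_orients_seymourVertex_le [Fintype K] [Nonempty W] {p : ℝ}
    (hp : 1 / 2 ≤ p) (hp1 : p ≤ 1) (hD₀ : OrientedGraph D₀)
    (hno : ∀ a, ¬ SeymourVertex D₀ a) (e : K × W ↪ V) :
    bernoulliProb p (⊤ : SimpleGraph V).edgeFinset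
        (fun S => ∀ D, Orients D (fromEdgeSet (S : Set (Sym2 V))) →
          ∃ v, SeymourVertex D v) ≤
      (1 - min p (1 - p) ^ #(⊤ : SimpleGraph W).edgeFinset) ^ Fintype.card K +
        ∑ X : Finset V with X.Nonempty ∧ X ≠ univ, (2 * √(p * (1 - p))) ^ (#Xᶜ * #X) := by
  have hp0 : 0 ≤ p := by linarith
  refine (bernoulliProb_mono hp0 hp1 fun S _ => forall_inter_ne_or_exists_cut hD₀ hno e).trans
    ((bernoulliProb_or_le hp0 hp1 _ _ _).trans (add_le_add ?_ ?_))
  · have := bernoulliProb_forall_inter_ne_le hp0 hp1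
      (A := fun k => (⊤ : SimpleGraph W).edgeFinset.map (rowEmbedding e k).sym2Map)
      (T := fun k => (fromRel D₀).edgeFinset.map (rowEmbedding e k).sym2Map)
      (q := min p (1 - p) ^ #(⊤ : SimpleGraph W).edgeFinset)
      (fun k => map_subset_map.mpr (edgeFinset_mono le_top))
      (fun k => card_map (rowEmbedding e k).sym2Map (s := (⊤ : SimpleGraph W).edgeFinset) ▸
        min_pow_card_le_bernoulliWeight hp0 hp1 (map_subset_map.mpr (edgeFinset_mono le_top)))
      univ (fun k _ l _ hkl => disjoint_map_sym2Map_rowEmbedding e hkl _ _) _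
      (fun k _ => map_sym2Map_edgeFinset_subset _ _)
    simpa using this
  · refine (bernoulliProb_exists_le hp0 hp1 _ _ _).trans (sum_le_sum fun X _ => ?_)
    rw [← card_cutEdges]
    refine (bernoulliProb_mono hp0 hp1 fun S _ hS => ?_).trans
      (bernoulliProb_two_mul_card_inter_le hp hp1 (cutEdges_subset X))
    rw [card_inter_cutEdges, card_cutEdges, mul_sum, ← smul_eq_mul]
    exact sum_le_card_nsmul _ _ _ hS

end SeymourInRandomGraph

section Asymptotics

open Finset Topology

lemma two_mul_sqrt_mul_one_sub_le_one (p : ℝ) : 2 * √(p * (1 - p)) ≤ 1 := by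
  have : √(p * (1 - p)) ≤ 1 / 2 :=
    (Real.sqrt_le_left (by norm_num)).mpr (by nlinarith [sq_nonneg (2 * p - 1)])
  linarith

lemma two_mul_sqrt_mul_one_sub_lt_one {p : ℝ} (hp : p ≠ 1 / 2) : 2 * √(p * (1 - p)) < 1 := by
  have h : 0 < (2 * p - 1) ^ 2 := pow_two_pos_of_ne_zero fun h => hp (by linarith)
  have : √(p * (1 - p)) < 1 / 2 := (Real.sqrt_lt' (by norm_num)).mpr (by nlinarith)
  linarith

/-- Each term is at most `a ^ #X + a ^ #Xᶜ` with `a = σ ^ n`, since `2 * #Xᶜ * #X` is at least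
`n * min #X #Xᶜ`; the two resulting sums are binomial. -/
lemma sum_pow_card_compl_mul_card_le {V : Type*} [Fintype V] [DecidableEq V] {σ : ℝ}
    (hσ0 : 0 ≤ σ) (hσ1 : σ ≤ 1) :
    ∑ X : Finset V with X.Nonempty ∧ X ≠ univ, (σ ^ 2) ^ (#Xᶜ * #X) ≤
      2 * ((1 + σ ^ Fintype.card V) ^ Fintype.card V - 1) := by
  set n := Fintype.card V
  set a := σ ^ n
  have ha : 0 ≤ a := by positivity
  have hterm : ∀ X : Finset V, (σ ^ 2) ^ (#Xᶜ * #X) ≤ a ^ #X + a ^ #Xᶜ := by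
    intro X
    have hX : #X + #Xᶜ = n := card_add_card_compl X
    rw [← pow_mul]
    rcases le_total (2 * #X) n with h | h
    · calc σ ^ (2 * (#Xᶜ * #X)) ≤ σ ^ (n * #X) :=
            pow_le_pow_of_le_one hσ0 hσ1 (by nlinarith)
        _ ≤ a ^ #X + a ^ #Xᶜ := by rw [pow_mul]; exact le_add_of_nonneg_right (by positivity)
    · calc σ ^ (2 * (#Xᶜ * #X)) ≤ σ ^ (n * #Xᶜ) :=
            pow_le_pow_of_le_one hσ0 hσ1 (by nlinarith)
        _ ≤ a ^ #X + a ^ #Xᶜ := by rw [pow_mul]; exact le_add_of_nonneg_left (by positivity)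
  have htot : ∑ X : Finset V, a ^ #X = (1 + a) ^ n := by
    simpa [add_comm, powerset_univ] using sum_pow_mul_eq_add_pow a 1 (univ : Finset V)
  have htot' : ∑ X : Finset V, a ^ #Xᶜ = (1 + a) ^ n :=
    (Fintype.sum_bijective _ compl_bijective _ _ fun _ => rfl).trans htot
  have hsum₁ : ∑ X : Finset V with X.Nonempty ∧ X ≠ univ, a ^ #X ≤ (1 + a) ^ n - 1 := by
    have h := sum_erase_eq_sub (f := fun X : Finset V => a ^ #X) (mem_univ ∅)
    rw [htot, card_empty, pow_zero] at h
    rw [← h]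
    refine sum_le_sum_of_subset_of_nonneg (fun X hX => ?_) fun _ _ _ => by positivity
    simp only [mem_filter, mem_univ, true_and] at hX
    exact mem_erase.mpr ⟨hX.1.ne_empty, mem_univ X⟩
  have hsum₂ :
      ∑ X : Finset V with X.Nonempty ∧ X ≠ univ, a ^ #Xᶜ ≤ (1 + a) ^ n - 1 := by
    have h := sum_erase_eq_sub (f := fun X : Finset V => a ^ #Xᶜ) (mem_univ univ)
    rw [htot', compl_univ, card_empty, pow_zero] at h
    rw [← h]
    refine sum_le_sum_of_subset_of_nonneg (fun X hX => ?_) fun _ _ _ => by positivity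
    simp only [mem_filter, mem_univ, true_and] at hX
    exact mem_erase.mpr ⟨hX.2, mem_univ X⟩
  calc _ ≤ ∑ X : Finset V with X.Nonempty ∧ X ≠ univ, (a ^ #X + a ^ #Xᶜ) :=
        sum_le_sum fun X _ => hterm X
    _ ≤ 2 * ((1 + a) ^ n - 1) := by rw [sum_add_distrib]; linarith

lemma tendsto_one_add_pow_pow_atTop_nhds_one {σ : ℝ} (h0 : 0 ≤ σ) (h1 : σ < 1) :
    Tendsto (fun n : ℕ => (1 + σ ^ n) ^ n) atTop (𝓝 1) := by
  have hexp : Tendsto (fun n : ℕ => Real.exp (n * σ ^ n)) atTop (𝓝 1) := by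
    simpa [Function.comp_def] using
      (Real.continuous_exp.tendsto 0).comp (tendsto_self_mul_const_pow_of_lt_one h0 h1)
  refine tendsto_of_tendsto_of_tendsto_of_le_of_le tendsto_const_nhds hexp
    (fun n => one_le_pow₀ (le_add_of_nonneg_right (by positivity))) fun n => ?_
  calc (1 + σ ^ n) ^ n ≤ Real.exp (σ ^ n) ^ n := by
        gcongr; linarith [Real.add_one_le_exp (σ ^ n)]
    _ = Real.exp (n * σ ^ n) := (Real.exp_nat_mul _ n).symm

end Asymptotics

section SeymourInGnp

open Finset SimpleGraph Topology

lemma gnpProb_forall_orients_seymourVertex_le {p : ℝ} (hp : 1 / 2 ≤ p) (hp1 : p ≤ 1) {m : ℕ}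
    (hm : 0 < m) {D₀ : Fin m → Fin m → Prop} (hD₀ : OrientedGraph D₀)
    (hno : ∀ a, ¬ SeymourVertex D₀ a) (n : ℕ) :
    gnpProb n p
        (fun G => ∀ D : Fin n → Fin n → Prop, Orients D G → ∃ v, SeymourVertex D v) ≤
      (1 - min p (1 - p) ^ #(⊤ : SimpleGraph (Fin m)).edgeFinset) ^ (n / m) +
        2 * ((1 + √(2 * √(p * (1 - p))) ^ n) ^ n - 1) := by
  have : Nonempty (Fin m) := ⟨⟨0, hm⟩⟩
  have hσ : √(2 * √(p * (1 - p))) ^ 2 = 2 * √(p * (1 - p)) := Real.sq_sqrt (by positivity)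
  have hσ1 : √(2 * √(p * (1 - p))) ≤ 1 :=
    Real.sqrt_le_one.mpr (two_mul_sqrt_mul_one_sub_le_one p)
  rw [gnpProb_eq_bernoulliProb]
  refine (bernoulliProb_forall_orients_seymourVertex_le hp hp1 hD₀ hno
    (finProdFinEquiv.toEmbedding.trans (Fin.castLEEmb (Nat.div_mul_le_self n m)))).trans ?_
  rw [Fintype.card_fin]
  gcongr
  have := sum_pow_card_compl_mul_card_le (V := Fin n) (Real.sqrt_nonneg _) hσ1
  rwa [hσ, Fintype.card_fin] at this

lemma tendsto_gnpProb_forall_orients_seymourVertex {p : ℝ} (hp : 1 / 2 < p) (hp1 : p < 1)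
    {m : ℕ} (hm : 0 < m) {D₀ : Fin m → Fin m → Prop} (hD₀ : OrientedGraph D₀)
    (hno : ∀ a, ¬ SeymourVertex D₀ a) :
    Tendsto (fun n => gnpProb n p
        (fun G => ∀ D : Fin n → Fin n → Prop, Orients D G → ∃ v, SeymourVertex D v))
      atTop (𝓝 0) := by
  set q := min p (1 - p) ^ #(⊤ : SimpleGraph (Fin m)).edgeFinset
  have hq0 : 0 < q := pow_pos (lt_min (by linarith) (by linarith)) _
  have hq1 : q ≤ 1 :=
    pow_le_one₀ (le_min (by linarith) (by linarith)) ((min_le_left _ _).trans hp1.le)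
  have hσ : √(2 * √(p * (1 - p))) < 1 :=
    (Real.sqrt_lt' one_pos).mpr (by simpa using two_mul_sqrt_mul_one_sub_lt_one hp.ne')
  have hblocks := (tendsto_pow_atTop_nhds_zero_of_lt_one (by linarith)
    (by linarith : 1 - q < 1)).comp (Nat.tendsto_div_const_atTop hm.ne')
  have hcuts :=
    ((tendsto_one_add_pow_pow_atTop_nhds_one (Real.sqrt_nonneg _) hσ).sub_const 1).const_mul 2
  refine tendsto_of_tendsto_of_tendsto_of_le_of_le tendsto_const_nhds
    (by simpa only [sub_self, mul_zero, add_zero, Function.comp_def, q] using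
      hblocks.add hcuts) (fun n => ?_)
    (gnpProb_forall_orients_seymourVertex_le hp.le hp1.le hm hD₀ hno)
  rw [gnpProb_eq_bernoulliProb]
  exact bernoulliProb_nonneg (by linarith) hp1.le _ _

end SeymourInGnp

/-- for fixed `p ∈ (1/2, 1)`, if with probability bounded away from `0`
(for infinitely many `n`) every orientation of `G(n,p)` has a Seymour vertex, then every
(nonempty) oriented graph has a Seymour vertex. -/
theorem stmt_2 (p : ℝ) (hp0 : 1/2 < p) (hp1 : p < 1)
    (h : ∃ c > (0 : ℝ), ∃ᶠ n in atTop,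
      c ≤ gnpProb n p (fun G =>
        ∀ D : Fin n → Fin n → Prop, Orients D G → ∃ v, SeymourVertex D v)) :
    ∀ (m : ℕ), 0 < m → ∀ D : Fin m → Fin m → Prop, OrientedGraph D →
      ∃ v, SeymourVertex D v := by
  intro m hm D₀ hD₀
  by_contra! hno
  obtain ⟨c, hc, hfreq⟩ := h
  obtain ⟨n, hcn, hn⟩ := (hfreq.and_eventually ((tendsto_gnpProb_forall_orients_seymourVertex
    hp0 hp1 hm hD₀ hno).eventually_lt_const hc)).exists
  exact hn.not_ge hcn
end

section
/- Suppose there exists an oriented graph with no Seymour vertex. Then for every function d : ℕ → ℝ with d(n) → ∞ as n → ∞, there exist infinitely many n ∈ ℕ for which there exists an n-vertex strongly-connected oriented graph D with δ⁺(D) < d(n) that contains no Seymour vertex. -/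
open Filter

/-!
Place `k ≥ 3` copies of a Seymour-free oriented graph `D₀` on `m` vertices around a directed
cycle, each vertex dominating the whole next copy. Every vertex then gains the next copy as
first outneighbours and the copy after it as second outneighbours, `m` of each, so the blow-up
is still Seymour-free; it is strongly connected, has `m k` vertices and outdegrees at most
`2 m`, which is below `d (m k)` for large `k`.
-/

open Function Relation

section Transport

variable {α β : Type*} (D : α → α → Prop) (e : β ≃ α)

lemma outNbr_onFun (b : β) : outNbr (D on e) b = e ⁻¹' outNbr D (e b) := by
  ext w
  simp [outNbr]

lemma outNbr2_onFun (b : β) : outNbr2 (D on e) b = e ⁻¹' outNbr2 D (e b) := by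
  ext w
  simp [outNbr2, outNbr_onFun, e.surjective.exists]

lemma ncard_outNbr_onFun (b : β) : (outNbr (D on e) b).ncard = (outNbr D (e b)).ncard := by
  rw [outNbr_onFun, Set.ncard_preimage_of_injective_subset_range e.injective (by simp)]

lemma ncard_outNbr2_onFun (b : β) : (outNbr2 (D on e) b).ncard = (outNbr2 D (e b)).ncard := by
  rw [outNbr2_onFun, Set.ncard_preimage_of_injective_subset_range e.injective (by simp)]

lemma seymourVertex_onFun_iff (b : β) : SeymourVertex (D on e) b ↔ SeymourVertex D (e b) := by
  rw [SeymourVertex, SeymourVertex, ncard_outNbr_onFun, ncard_outNbr2_onFun]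

lemma OrientedGraph.onFun {D : α → α → Prop} (h : OrientedGraph D) (f : β → α) :
    OrientedGraph (D on f) :=
  fun u v => h (f u) (f v)

lemma StrongConn.onFun {D : α → α → Prop} (h : StrongConn D) : StrongConn (D on e) := by
  intro a b
  have hD : D ≤ ((D on e) on e.symm) := fun x y hxy => by
    simpa only [Function.onFun, Equiv.apply_symm_apply] using hxy
  simpa only [Function.onFun, Equiv.symm_apply_apply] using
    ReflTransGen.lift e.symm hD _ _ (h (e a) (e b))

end Transport

lemma ZMod.add_natCast_ne_self {k n : ℕ} (h0 : 0 < n) (hn : n < k) (i : ZMod k) :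
    i + n ≠ i := by
  rw [Ne, add_eq_left, ZMod.natCast_eq_zero_iff]
  exact fun h => absurd (Nat.le_of_dvd h0 h) (by omega)

lemma Set.ncard_prod_singleton_union_prod_singleton {α β : Type*} [Finite α] (s t : Set α)
    {a b : β} (hab : a ≠ b) : (s ×ˢ {a} ∪ t ×ˢ {b}).ncard = s.ncard + t.ncard := by
  rw [Set.ncard_union_eq (Set.disjoint_prod.2 (Or.inr (Set.disjoint_singleton.2 hab)))
    (s.toFinite.prod (Set.finite_singleton a)) (t.toFinite.prod (Set.finite_singleton b)),
    Set.ncard_prod, Set.ncard_prod]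
  simp only [Set.ncard_singleton, mul_one]

section CyclicBlowup

variable {V : Type*} (D₀ : V → V → Prop) {k : ℕ}

def cycBlowup (D₀ : V → V → Prop) (k : ℕ) (p q : V × ZMod k) : Prop :=
  (q.2 = p.2 ∧ D₀ p.1 q.1) ∨ q.2 = p.2 + 1

lemma orientedGraph_cycBlowup (hk : 3 ≤ k) (h : OrientedGraph D₀) :
    OrientedGraph (cycBlowup D₀ k) := by
  have h1 (i : ZMod k) : i + 1 ≠ i := by
    exact_mod_cast ZMod.add_natCast_ne_self one_pos (by omega) i
  have h2 (i : ZMod k) : i + 2 ≠ i := by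
    exact_mod_cast ZMod.add_natCast_ne_self two_pos (by omega) i
  rintro ⟨v, i⟩ ⟨w, j⟩ (⟨rfl, hvw⟩ | rfl) (⟨hij, hwv⟩ | hij)
  · exact h v w hvw hwv
  · exact h1 _ hij.symm
  · exact h1 _ hij.symm
  · exact h2 i (by simp only at hij; linear_combination -hij)

lemma strongConn_cycBlowup [NeZero k] : StrongConn (cycBlowup D₀ k) := by
  have reach (v : V) (i : ZMod k) (c : ℕ) (w : V) :
      ReflTransGen (cycBlowup D₀ k) (v, i) (w, i + c + 1) := by
    induction c generalizing w with
    | zero => simpa using ReflTransGen.single (show cycBlowup D₀ k (v, i) (w, i + 1) from Or.inr rfl)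
    | succ c ih =>
      convert (ih v).tail (Or.inr rfl : cycBlowup D₀ k _ (w, i + c + 1 + 1)) using 3
      push_cast
      ring
  rintro ⟨v, i⟩ ⟨w, j⟩
  convert reach v i (j - i - 1).val w using 2
  rw [ZMod.natCast_zmod_val]
  ring

lemma outNbr_cycBlowup (hk : 3 ≤ k) (v : V) (i : ZMod k) :
    outNbr (cycBlowup D₀ k) (v, i) = outNbr D₀ v ×ˢ {i} ∪ Set.univ ×ˢ {i + 1} := by
  have h1 : i + 1 ≠ i := by exact_mod_cast ZMod.add_natCast_ne_self one_pos (by omega) i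
  ext ⟨w, j⟩
  simp only [outNbr, cycBlowup]
  obtain rfl | hj0 := eq_or_ne j i
  · simp [h1.symm]
  · simp [hj0]

lemma outNbr2_cycBlowup (hk : 3 ≤ k) (v : V) (i : ZMod k) :
    outNbr2 (cycBlowup D₀ k) (v, i) = outNbr2 D₀ v ×ˢ {i} ∪ Set.univ ×ˢ {i + 2} := by
  have h1 : i + 1 ≠ i := by exact_mod_cast ZMod.add_natCast_ne_self one_pos (by omega) i
  have h2 : i + 2 ≠ i := by exact_mod_cast ZMod.add_natCast_ne_self two_pos (by omega) i
  have h21 : i + 2 ≠ i + 1 := by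
    rw [show i + 2 = i + 1 + 1 by ring]
    exact_mod_cast ZMod.add_natCast_ne_self one_pos (by omega) (i + 1)
  ext ⟨w, j⟩
  simp only [outNbr2, outNbr_cycBlowup D₀ hk, cycBlowup]
  obtain rfl | hj0 := eq_or_ne j i
  · simp [h1.symm, h2.symm, add_assoc, one_add_one_eq_two]
  obtain rfl | hj1 := eq_or_ne j (i + 1)
  · simp [h1, h21.symm]
  obtain rfl | hj2 := eq_or_ne j (i + 2)
  · simpa [h2, h21, add_assoc, one_add_one_eq_two] using ⟨w⟩
  · simp [hj0, hj1, hj2, add_assoc, one_add_one_eq_two]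

variable [Finite V]

lemma ncard_outNbr_cycBlowup (hk : 3 ≤ k) (p : V × ZMod k) :
    (outNbr (cycBlowup D₀ k) p).ncard = (outNbr D₀ p.1).ncard + Nat.card V := by
  have h1 : p.2 ≠ p.2 + 1 := by exact_mod_cast (ZMod.add_natCast_ne_self one_pos (by omega) _).symm
  rw [outNbr_cycBlowup D₀ hk, Set.ncard_prod_singleton_union_prod_singleton _ _ h1, Set.ncard_univ]

lemma ncard_outNbr2_cycBlowup (hk : 3 ≤ k) (p : V × ZMod k) :
    (outNbr2 (cycBlowup D₀ k) p).ncard = (outNbr2 D₀ p.1).ncard + Nat.card V := by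
  have h2 : p.2 ≠ p.2 + 2 := by exact_mod_cast (ZMod.add_natCast_ne_self two_pos (by omega) _).symm
  rw [outNbr2_cycBlowup D₀ hk, Set.ncard_prod_singleton_union_prod_singleton _ _ h2, Set.ncard_univ]

lemma ncard_outNbr_cycBlowup_le (hk : 3 ≤ k) (p : V × ZMod k) :
    (outNbr (cycBlowup D₀ k) p).ncard ≤ 2 * Nat.card V := by
  rw [ncard_outNbr_cycBlowup D₀ hk, two_mul]
  exact Nat.add_le_add_right (Set.ncard_le_card _) _

lemma seymourVertex_cycBlowup_iff (hk : 3 ≤ k) (p : V × ZMod k) :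
    SeymourVertex (cycBlowup D₀ k) p ↔ SeymourVertex D₀ p.1 := by
  rw [SeymourVertex, SeymourVertex, ncard_outNbr_cycBlowup D₀ hk, ncard_outNbr2_cycBlowup D₀ hk,
    add_le_add_iff_right]

end CyclicBlowup

/-- if some (nonempty) oriented graph has no Seymour vertex, then for every
function `d(n) → ∞` there are infinitely many `n` admitting an `n`-vertex
strongly-connected oriented graph with minimum outdegree `< d(n)` and no Seymour vertex. -/
theorem stmt_4
    (hcounter : ∃ (m : ℕ) (D₀ : Fin m → Fin m → Prop),
      0 < m ∧ OrientedGraph D₀ ∧ ∀ v, ¬ SeymourVertex D₀ v)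
    (d : ℕ → ℝ) (hd : Tendsto d atTop atTop) :
    ∀ N : ℕ, ∃ n, N ≤ n ∧ ∃ D : Fin n → Fin n → Prop,
      OrientedGraph D ∧ StrongConn D ∧
      (∃ v, ((outNbr D v).ncard : ℝ) < d n) ∧
      ∀ v, ¬ SeymourVertex D v := by
  obtain ⟨m, D₀, hm, hD₀, hD₀_noSeymour⟩ := hcounter
  intro N
  obtain ⟨K, hK⟩ := eventually_atTop.1 (hd.eventually_gt_atTop (2 * m : ℝ))
  set k := N + K + 3
  have hk : 3 ≤ k := by omega
  have hkmk : k ≤ m * k := Nat.le_mul_of_pos_left k hm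
  let e : Fin (m * k) ≃ Fin m × ZMod k := (Fintype.equivFinOfCardEq (by simp [ZMod.card])).symm
  refine ⟨m * k, by omega, cycBlowup D₀ k on e, (orientedGraph_cycBlowup D₀ hk hD₀).onFun e,
    (strongConn_cycBlowup D₀).onFun e, ⟨e.symm (⟨0, hm⟩, 0), ?_⟩, fun b => ?_⟩
  · have hdeg := ncard_outNbr_cycBlowup_le D₀ hk (e (e.symm (⟨0, hm⟩, 0)))
    rw [← ncard_outNbr_onFun, Nat.card_fin] at hdeg
    calc _ ≤ (2 * m : ℝ) := by exact_mod_cast hdeg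
      _ < d (m * k) := hK _ (by omega)
  · rw [seymourVertex_onFun_iff, seymourVertex_cycBlowup_iff D₀ hk]
    exact hD₀_noSeymour _
end

section
/- Let D be an oriented graph on n vertices that contains no Seymour vertex, and suppose that every oriented graph on fewer than n vertices contains a Seymour vertex (i.e., D is a vertex-minimal counterexample to Seymour's conjecture). Then D is strongly connected. -/
open Filter

/-- a vertex-minimal counterexample to Seymour's conjecture is strongly
connected. -/
theorem stmt_6 (n : ℕ) (D : Fin n → Fin n → Prop) (hD : OrientedGraph D)
    (hno : ∀ v, ¬ SeymourVertex D v)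
    (hmin : ∀ m : ℕ, 0 < m → m < n → ∀ D' : Fin m → Fin m → Prop,
      OrientedGraph D' → ∃ v, SeymourVertex D' v) :
    StrongConn D := by
  intro u v
  by_contra hreach
  classical
  set S : Set (Fin n) := {w | Relation.ReflTransGen D u w} with hS
  have huS : u ∈ S := Relation.ReflTransGen.refl
  have hvS : v ∉ S := hreach
  have hclosed : ∀ x ∈ S, ∀ y, D x y → y ∈ S := fun x hx y hxy => hx.tail hxy
  set m := Fintype.card S with hmdef
  have hm0 : 0 < m := Fintype.card_pos_iff.mpr ⟨⟨u, huS⟩⟩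
  have hmn : m < n := by
    calc m = Fintype.card S := hmdef
      _ < Fintype.card (Fin n) := Fintype.card_subtype_lt (p := fun x => x ∈ S) (x := v) hvS
      _ = n := Fintype.card_fin n
  let e : S ≃ Fin m := Fintype.equivFin S
  let f : Fin m → Fin n := fun b => (e.symm b : Fin n)
  have hfinj : Function.Injective f := by
    intro a b h
    exact e.symm.injective (Subtype.val_injective h)
  have hfrange : Set.range f = S := by
    ext y
    constructor
    · rintro ⟨b, rfl⟩; exact (e.symm b).2
    · intro hy; exact ⟨e ⟨y, hy⟩, by simp [f]⟩
  set D' : Fin m → Fin m → Prop := fun a b => D (f a) (f b) with hD'def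
  have hD' : OrientedGraph D' := fun a b h => hD _ _ h
  obtain ⟨a, ha⟩ := hmin m hm0 hmn D' hD'
  set w := f a with hw
  have hwS : w ∈ S := (e.symm a).2
  have h1 : f '' outNbr D' a = outNbr D w := by
    ext y
    simp only [Set.mem_image, outNbr, Set.mem_setOf_eq]
    constructor
    · rintro ⟨b, ⟨hba, hb⟩, rfl⟩
      exact ⟨fun h => hba (hfinj h), hb⟩
    · rintro ⟨hyw, hy⟩
      have hyS : y ∈ S := hclosed w hwS y hy
      have : y ∈ Set.range f := hfrange ▸ hyS
      obtain ⟨b, rfl⟩ := this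
      exact ⟨b, ⟨fun h => hyw (by rw [h]), hy⟩, rfl⟩
  have h2 : f '' outNbr2 D' a = outNbr2 D w := by
    ext y
    simp only [Set.mem_image, outNbr2, Set.mem_setOf_eq, Set.mem_insert_iff]
    constructor
    · rintro ⟨b, ⟨hb1, ⟨c, hc, hcb⟩⟩, rfl⟩
      refine ⟨?_, f c, ?_, hcb⟩
      · rintro (h | h)
        · exact hb1 (Or.inl (hfinj h))
        · rw [← h1] at h
          obtain ⟨b', hb', hbb'⟩ := h
          exact hb1 (Or.inr (hfinj hbb' ▸ hb'))
      · rw [← h1]; exact ⟨c, hc, rfl⟩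
    · rintro ⟨hy1, x, hx, hxy⟩
      rw [← h1] at hx
      obtain ⟨c, hc, rfl⟩ := hx
      have hyS : y ∈ S := hclosed (f c) (e.symm c).2 y hxy
      have : y ∈ Set.range f := hfrange ▸ hyS
      obtain ⟨b, rfl⟩ := this
      refine ⟨b, ⟨?_, c, hc, hxy⟩, rfl⟩
      rintro (h | h)
      · exact hy1 (Or.inl (by rw [h]))
      · exact hy1 (Or.inr (by rw [← h1]; exact ⟨b, h, rfl⟩))
  have : SeymourVertex D w := by
    unfold SeymourVertex
    rw [← h1, ← h2, Set.ncard_image_of_injective _ hfinj,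
      Set.ncard_image_of_injective _ hfinj]
    exact ha
  exact hno w this
end

section
/- Let ε ∈ (0, 1/2] and let k be a positive integer. Let G be a finite simple graph such that for every pair of disjoint vertex sets A, B ⊆ V(G) with |A|, |B| ≥ k, one has e(A,B) ≤ (1 − ε)|A||B|/2. Let G⃗ be an orientation of G and let v be a vertex such that the set {u ∈ N1(v) : d⁺(u) ≥ d⁺(v)} has size at least 2k/ε. Then v is a Seymour vertex of G⃗. -/
open Filter

lemma ncard_eq_card_filter' {V : Type*} [Fintype V] (A : Set V) [DecidablePred (· ∈ A)] :
    A.ncard = (Finset.univ.filter (· ∈ A)).card := by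
  rw [← Set.ncard_coe_finset]; congr 1; ext w; simp

/-- if in `G` every pair of disjoint sets of size at least `k` spans at most
`(1-ε)|A||B|/2` edges, then in any orientation of `G`, any vertex `v` having at least
`2k/ε` outneighbours of outdegree at least `d⁺(v)` is a Seymour vertex. -/
theorem stmt_8 {V : Type*} [Fintype V] (ε : ℝ) (hε0 : 0 < ε) (hε1 : ε ≤ 1/2)
    (k : ℕ) (hk : 0 < k) (G : SimpleGraph V)
    (hG : ∀ A B : Set V, Disjoint A B → k ≤ A.ncard → k ≤ B.ncard →
      (eBtw G A B : ℝ) ≤ (1 - ε) * A.ncard * B.ncard / 2)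
    (D : V → V → Prop) (hD : Orients D G) (v : V)
    (hv : 2 * k / ε ≤
      (({u ∈ outNbr D v | (outNbr D v).ncard ≤ (outNbr D u).ncard}).ncard : ℝ)) :
    SeymourVertex D v := by
  classical
  by_contra hSey
  rw [SeymourVertex, not_le] at hSey
  obtain ⟨hasym, hadj⟩ := hD
  set N1 : Finset V := Finset.univ.filter (· ∈ outNbr D v) with hN1def
  set N2 : Finset V := Finset.univ.filter (· ∈ outNbr2 D v) with hN2def
  set S : Finset V := Finset.univ.filter
    (· ∈ {u ∈ outNbr D v | (outNbr D v).ncard ≤ (outNbr D u).ncard}) with hSdef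
  set T : Finset V := (N1 ∪ N2) \ S with hTdef
  have hN1c : (outNbr D v).ncard = N1.card := ncard_eq_card_filter' _
  have hN2c : (outNbr2 D v).ncard = N2.card := ncard_eq_card_filter' _
  have hSc : ({u ∈ outNbr D v | (outNbr D v).ncard ≤ (outNbr D u).ncard}).ncard = S.card :=
    ncard_eq_card_filter' _
  rw [hN1c, hN2c] at hSey
  rw [hSc] at hv
  have hmemS : ∀ u, u ∈ S ↔ (u ∈ outNbr D v ∧ N1.card ≤ (outNbr D u).ncard) := by
    intro u; rw [hSdef]; simp [Set.mem_sep_iff, hN1c]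
  have hmemN1 : ∀ u, u ∈ N1 ↔ u ∈ outNbr D v := by intro u; rw [hN1def]; simp
  have hmemN2 : ∀ u, u ∈ N2 ↔ u ∈ outNbr2 D v := by intro u; rw [hN2def]; simp
  have hSsubN1 : S ⊆ N1 := by
    intro u hu; rw [hmemN1]; exact ((hmemS u).1 hu).1
  have hsd : S.card ≤ N1.card := Finset.card_le_card hSsubN1
  -- s ≥ 4k
  have h4k : 4 * k ≤ S.card := by
    have h1 : (4 * k : ℝ) ≤ 2 * k / ε := by
      rw [le_div_iff₀ hε0]
      nlinarith [Nat.cast_nonneg (α := ℝ) k]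
    exact_mod_cast h1.trans hv
  have hs1 : 1 ≤ S.card := by omega
  -- out-neighbour finsets and the arc set
  set outF : V → Finset V := fun u => Finset.univ.filter (· ∈ outNbr D u) with houtFdef
  have houtFc : ∀ u, (outNbr D u).ncard = (outF u).card := fun u => ncard_eq_card_filter' _
  set E : Finset (V × V) :=
    Finset.univ.filter (fun p : V × V => p.1 ∈ S ∧ p.2 ∈ outNbr D p.1) with hEdef
  have hmemE : ∀ p : V × V, p ∈ E ↔ (p.1 ∈ S ∧ p.2 ∈ outNbr D p.1) := by
    intro p; rw [hEdef]; simp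
  have hdeg : S.card * N1.card ≤ E.card := by
    have hfib : ∀ u ∈ S, E.filter (fun p => p.1 = u) = {u} ×ˢ outF u := by
      intro u hu
      ext ⟨a, b⟩
      simp only [Finset.mem_filter, hmemE, Finset.mem_product, Finset.mem_singleton,
        houtFdef, Finset.mem_univ, true_and]
      constructor
      · rintro ⟨⟨ha, hb⟩, rfl⟩; exact ⟨rfl, hb⟩
      · rintro ⟨rfl, hb⟩; exact ⟨⟨hu, hb⟩, rfl⟩
    have hE : E.card = ∑ u ∈ S, (outF u).card := by
      rw [Finset.card_eq_sum_card_fiberwise (f := Prod.fst) (t := S)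
        (fun p hp => ((hmemE p).1 hp).1)]
      refine Finset.sum_congr rfl fun u hu => ?_
      rw [hfib u hu, Finset.card_product, Finset.card_singleton, one_mul]
    rw [hE]
    calc S.card * N1.card = ∑ _u ∈ S, N1.card := by rw [Finset.sum_const, smul_eq_mul]
      _ ≤ ∑ u ∈ S, (outF u).card := by
          refine Finset.sum_le_sum fun u hu => ?_
          exact le_trans ((hmemS u).1 hu).2 (le_of_eq (houtFc u))
  -- every arc from S lands in N1 ∪ N2
  have hland : ∀ p : V × V, p ∈ E → p.2 ∈ N1 ∪ N2 := by
    rintro ⟨a, b⟩ hp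
    obtain ⟨haS, hba, hab⟩ := (hmemE _).1 hp
    obtain ⟨hav, hva⟩ : a ∈ outNbr D v := ((hmemS a).1 haS).1
    rw [Finset.mem_union, hmemN1, hmemN2]
    by_cases hb : b ∈ outNbr D v
    · exact Or.inl hb
    · refine Or.inr ⟨?_, a, ⟨hav, hva⟩, hab⟩
      rw [Set.mem_insert_iff]
      rintro (rfl | hb')
      · exact hasym _ _ hva hab
      · exact hb hb'
  set ESS : Finset (V × V) := E.filter (fun p => p.2 ∈ S) with hESSdef
  set EST : Finset (V × V) := E.filter (fun p => p.2 ∈ T) with hESTdef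
  have hsplit : E.card ≤ ESS.card + EST.card := by
    have h1 : ESS.card + (E.filter (fun p : V × V => ¬ p.2 ∈ S)).card = E.card := by
      rw [hESSdef]
      exact Finset.card_filter_add_card_filter_not (p := fun p : V × V => p.2 ∈ S)
    have h2 : E.filter (fun p : V × V => ¬ p.2 ∈ S) ⊆ EST := by
      intro p hp
      rw [Finset.mem_filter] at hp
      rw [hESTdef, Finset.mem_filter, hTdef, Finset.mem_sdiff]
      exact ⟨hp.1, hland p hp.1, hp.2⟩
    have := Finset.card_le_card h2
    omega
  -- bound on arcs inside S
  have hSS : 2 * ESS.card + S.card ≤ S.card * S.card := by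
    have himg : (ESS.image Prod.swap).card = ESS.card :=
      Finset.card_image_of_injective _ Prod.swap_injective
    have hmESS : ∀ a b : V, (a, b) ∈ ESS ↔ ((a ∈ S ∧ b ≠ a ∧ D a b) ∧ b ∈ S) := by
      intro a b
      rw [hESSdef, Finset.mem_filter, hmemE]
      exact Iff.rfl
    have hdisj : Disjoint ESS (ESS.image Prod.swap) := by
      rw [Finset.disjoint_left]
      rintro ⟨a, b⟩ h1 h2
      rw [Finset.mem_image] at h2
      obtain ⟨⟨c, d⟩, hcd, hsw⟩ := h2
      obtain ⟨hc, hd⟩ : a = d ∧ b = c := by simpa [Prod.ext_iff] using hsw.symm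
      subst hc; subst hd
      exact hasym _ _ ((hmESS _ _).1 h1).1.2.2 ((hmESS _ _).1 hcd).1.2.2
    have hsub2 : ESS ∪ ESS.image Prod.swap ⊆ (S ×ˢ S).filter (fun p => p.1 ≠ p.2) := by
      intro p hp
      rw [Finset.mem_union] at hp
      rw [Finset.mem_filter, Finset.mem_product]
      rcases hp with hp | hp
      · obtain ⟨⟨h1, h2, _⟩, h3⟩ := (hmESS p.1 p.2).1 hp
        exact ⟨⟨h1, h3⟩, fun h => h2 h.symm⟩
      · rw [Finset.mem_image] at hp
        obtain ⟨⟨c, d⟩, hcd, rfl⟩ := hp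
        obtain ⟨⟨h1, h2, _⟩, h3⟩ := (hmESS c d).1 hcd
        exact ⟨⟨h3, h1⟩, fun h => h2 h⟩
    have hdiag : ((S ×ˢ S).filter (fun p : V × V => p.1 = p.2)).card = S.card := by
      have : (S ×ˢ S).filter (fun p : V × V => p.1 = p.2) = S.image (fun u => (u, u)) := by
        ext ⟨a, b⟩
        simp only [Finset.mem_filter, Finset.mem_product, Finset.mem_image, Prod.ext_iff]
        constructor
        · rintro ⟨⟨h1, _⟩, h⟩; exact ⟨a, h1, rfl, h⟩
        · rintro ⟨c, hc, rfl, rfl⟩; exact ⟨⟨hc, hc⟩, rfl⟩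
      rw [this]
      exact Finset.card_image_of_injective _ (fun a b h => (Prod.ext_iff.1 h).1)
    have htot := Finset.card_filter_add_card_filter_not (s := S ×ˢ S)
      (p := fun p : V × V => p.1 = p.2)
    rw [Finset.card_product] at htot
    have hle := Finset.card_le_card hsub2
    rw [Finset.card_union_of_disjoint hdisj, himg] at hle
    simp only [hdiag] at htot
    have : ((S ×ˢ S).filter (fun p : V × V => ¬ p.1 = p.2)).card
        = ((S ×ˢ S).filter (fun p : V × V => p.1 ≠ p.2)).card := rfl
    omega
  -- bound |T| : t + s + 1 ≤ 2d
  have hTbound : T.card + S.card + 1 ≤ 2 * N1.card := by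
    have h1 : T ⊆ (N1 \ S) ∪ N2 := by
      intro x hx
      rw [hTdef, Finset.mem_sdiff, Finset.mem_union] at hx
      rw [Finset.mem_union, Finset.mem_sdiff]
      rcases hx.1 with h | h
      · exact Or.inl ⟨h, hx.2⟩
      · exact Or.inr h
    have h2 : T.card ≤ (N1 \ S).card + N2.card :=
      (Finset.card_le_card h1).trans (Finset.card_union_le _ _)
    rw [Finset.card_sdiff_of_subset hSsubN1] at h2
    omega
  have main : 2 * (S.card * N1.card) + S.card ≤ S.card * S.card + 2 * EST.card := by
    omega
  -- disjointness of S and T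
  have hdisjST : Disjoint (↑S : Set V) (↑T : Set V) := by
    rw [Set.disjoint_left]
    intro a ha hb
    rw [Finset.mem_coe, hTdef, Finset.mem_sdiff] at hb
    exact hb.2 ha
  by_cases hkt : k ≤ T.card
  · -- use the sparseness hypothesis
    have hEST_le : (EST.card : ℝ) ≤ (1 - ε) * S.card * T.card / 2 := by
      have hGb := hG ↑S ↑T hdisjST
        (by rw [Set.ncard_coe_finset]; omega) (by rw [Set.ncard_coe_finset]; exact hkt)
      rw [Set.ncard_coe_finset, Set.ncard_coe_finset] at hGb
      refine le_trans ?_ hGb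
      rw [Nat.cast_le, eBtw, ncard_eq_card_filter']
      apply Finset.card_le_card
      intro p hp
      rw [hESTdef, Finset.mem_filter, hmemE] at hp
      obtain ⟨⟨h1, _, h3⟩, h2⟩ := hp
      simp only [Finset.mem_filter, Finset.mem_univ, true_and, Set.mem_setOf_eq,
        Finset.mem_coe]
      exact ⟨h1, h2, (hadj _ _).2 (Or.inl h3)⟩
    have r1 : 2 * ((S.card : ℝ) * N1.card) + S.card ≤ S.card * S.card + 2 * EST.card := by
      exact_mod_cast main
    have r3 : (T.card : ℝ) + S.card + 1 ≤ 2 * N1.card := by exact_mod_cast hTbound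
    have r4 : (4 : ℝ) ≤ S.card := by
      have : 4 ≤ S.card := by omega
      exact_mod_cast this
    have r5 : (1 : ℝ) ≤ T.card := by
      have : 1 ≤ T.card := by omega
      exact_mod_cast this
    have hε2 : (0 : ℝ) ≤ 1 - ε := by linarith
    have hs0 : (0 : ℝ) ≤ S.card := Nat.cast_nonneg _
    have q2 : ((1 - ε) * S.card) * T.card
        ≤ ((1 - ε) * S.card) * (2 * N1.card - S.card - 1) :=
      mul_le_mul_of_nonneg_left (by linarith) (mul_nonneg hε2 hs0)
    have q5 : (0 : ℝ) ≤ (ε * S.card) * (2 * N1.card - S.card - 1) :=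
      mul_nonneg (mul_nonneg hε0.le hs0) (by linarith)
    nlinarith [r1, hEST_le, q2, q5, r4]
  · -- small T
    push_neg at hkt
    have hEST_st : EST.card ≤ S.card * T.card := by
      rw [← Finset.card_product]
      apply Finset.card_le_card
      intro p hp
      rw [hESTdef, Finset.mem_filter, hmemE] at hp
      rw [Finset.mem_product]
      exact ⟨hp.1.1, hp.2⟩
    have r1 : 2 * ((S.card : ℝ) * N1.card) + S.card ≤ S.card * S.card + 2 * (S.card * T.card) := by
      have : 2 * (S.card * N1.card) + S.card ≤ S.card * S.card + 2 * (S.card * T.card) := by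
        have := main
        have h2 := Nat.mul_le_mul_left 2 hEST_st
        omega
      exact_mod_cast this
    have r2 : (S.card : ℝ) ≤ N1.card := by exact_mod_cast hsd
    have r3 : (T.card : ℝ) + 1 ≤ k := by exact_mod_cast hkt
    have r4 : (4 : ℝ) * k ≤ S.card := by exact_mod_cast h4k
    have r5 : (1 : ℝ) ≤ k := by exact_mod_cast hk
    have hs0 : (0 : ℝ) ≤ S.card := Nat.cast_nonneg _
    have ht0 : (0 : ℝ) ≤ T.card := Nat.cast_nonneg _
    have r6 : (4 : ℝ) ≤ S.card := by
      have : 4 ≤ S.card := by omega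
      exact_mod_cast this
    nlinarith [mul_le_mul_of_nonneg_left r2 hs0,
      mul_le_mul_of_nonneg_left r3 hs0,
      mul_le_mul_of_nonneg_left r4 hs0, r6,
      mul_nonneg hs0 ht0, mul_nonneg hs0 (by linarith : (0:ℝ) ≤ (k:ℝ))]
end

section
/- Let D be an oriented graph on h vertices with no Seymour vertex, and let H be its underlying (undirected) graph. Let G be a simple graph on n ≥ h vertices admitting a labelling x₁, …, xₙ of its vertices such that: (P1) the subgraph of G induced on {x₁, …, x_h} is isomorphic to H, and (P2) for every i ∈ {h+1, …, n}, the vertex x_i has at least i/2 neighbours in {x₁, …, x_{i−1}}. Then G admits an orientation with no Seymour vertex. -/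
open Filter

/-- if `G` has a good ordering with respect to a counterexample `D` on `h`
vertices (P1: the first `h` vertices induce a copy of the underlying graph of `D`;
P2: each later vertex, the `i`-th in the one-indexed order, has at least `i/2`
neighbours among the earlier vertices), then `G` admits an orientation with no
Seymour vertex. -/
theorem stmt_9 (h n : ℕ) (hhn : h ≤ n)
    (D : Fin h → Fin h → Prop) (hD : OrientedGraph D)
    (hno : ∀ v, ¬ SeymourVertex D v)
    (G : SimpleGraph (Fin n)) (x : Fin n ≃ Fin n)
    (hP1 : ∀ i j : Fin h,
      G.Adj (x (Fin.castLE hhn i)) (x (Fin.castLE hhn j)) ↔ (D i j ∨ D j i))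
    (hP2 : ∀ i : Fin n, h ≤ (i : ℕ) →
      (((i : ℕ) : ℝ) + 1) / 2 ≤
        (({w | G.Adj (x i) w ∧ ∃ j : Fin n, j < i ∧ x j = w}).ncard : ℝ)) :
    ∃ D' : Fin n → Fin n → Prop, Orients D' G ∧ ∀ v, ¬ SeymourVertex D' v := by
    classical
  set p : Fin n → ℕ := fun v => ((x.symm v : Fin n) : ℕ) with hp
  have hpinj : ∀ u v : Fin n, p u = p v → u = v := by
    intro u v huv
    exact x.symm.injective (Fin.ext huv)
  have hemb : ∀ (u : Fin n) (hu : p u < h), u = x (Fin.castLE hhn ⟨p u, hu⟩) := by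
    intro u hu
    have : Fin.castLE hhn ⟨p u, hu⟩ = x.symm u := Fin.ext rfl
    rw [this, Equiv.apply_symm_apply]
  have hpemb : ∀ j : Fin h, p (x (Fin.castLE hhn j)) = (j : ℕ) := by
    intro j
    simp only [hp, Equiv.symm_apply_apply]
    rfl
  have embinj : Function.Injective (fun i : Fin h => x (Fin.castLE hhn i)) := by
    intro a b hab
    exact Fin.castLE_injective hhn (x.injective hab)
  set D' : Fin n → Fin n → Prop := fun u v => G.Adj u v ∧
      ((∃ (hu : p u < h) (hv : p v < h), D ⟨p u, hu⟩ ⟨p v, hv⟩) ∨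
        (¬ (p u < h ∧ p v < h) ∧ p v < p u)) with hD'
  -- N1 of an embedded vertex
  have hN1h : ∀ j : Fin h, outNbr D' (x (Fin.castLE hhn j))
      = (fun i : Fin h => x (Fin.castLE hhn i)) '' outNbr D j := by
    intro j
    ext w
    simp only [outNbr, Set.mem_setOf_eq, Set.mem_image, hD']
    constructor
    · rintro ⟨hne, hadj, hcase⟩
      rcases hcase with ⟨hu, hv, hd⟩ | ⟨hnot, hlt⟩
      · refine ⟨⟨p w, hv⟩, ⟨?_, ?_⟩, (hemb w hv).symm⟩
        · intro hEq
          exact hne (by rw [hemb w hv, hEq])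
        · have h1 : (⟨p (x (Fin.castLE hhn j)), hu⟩ : Fin h) = j := Fin.ext (hpemb j)
          rwa [h1] at hd
      · exfalso
        refine hnot ⟨?_, ?_⟩
        · rw [hpemb j]; exact j.isLt
        · exact hlt.trans (by rw [hpemb j]; exact j.isLt)
    · rintro ⟨k, ⟨hkj, hdk⟩, rfl⟩
      have hu : p (x (Fin.castLE hhn j)) < h := by rw [hpemb j]; exact j.isLt
      have hv : p (x (Fin.castLE hhn k)) < h := by rw [hpemb k]; exact k.isLt
      have h1 : (⟨p (x (Fin.castLE hhn j)), hu⟩ : Fin h) = j := Fin.ext (hpemb j)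
      have h2 : (⟨p (x (Fin.castLE hhn k)), hv⟩ : Fin h) = k := Fin.ext (hpemb k)
      refine ⟨fun hEq => hkj (embinj hEq), (hP1 j k).2 (Or.inl hdk), Or.inl ⟨hu, hv, ?_⟩⟩
      rw [h1, h2]; exact hdk
  -- N2 of an embedded vertex
  have hN2h : ∀ j : Fin h, outNbr2 D' (x (Fin.castLE hhn j))
      = (fun i : Fin h => x (Fin.castLE hhn i)) '' outNbr2 D j := by
    intro j
    ext w
    simp only [outNbr2, Set.mem_setOf_eq, Set.mem_image, hN1h j, Set.mem_insert_iff]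
    constructor
    · rintro ⟨hwni, u, hu, hdw⟩
      rcases hu with ⟨k, hk, rfl⟩
      obtain ⟨hadj, hcase⟩ := hdw
      have hpk : p (x (Fin.castLE hhn k)) < h := by rw [hpemb k]; exact k.isLt
      have hwh : p w < h := by
        rcases hcase with ⟨_, hv', _⟩ | ⟨hnot, hlt⟩
        · exact hv'
        · exact hlt.trans hpk
      have hdkm : D k ⟨p w, hwh⟩ := by
        rcases hcase with ⟨hu', hv', hd⟩ | ⟨hnot, hlt⟩
        · have h1 : (⟨p (x (Fin.castLE hhn k)), hu'⟩ : Fin h) = k := Fin.ext (hpemb k)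
          rwa [h1] at hd
        · exact absurd ⟨hpk, hwh⟩ hnot
      refine ⟨⟨p w, hwh⟩, ⟨?_, k, hk, hdkm⟩, (hemb w hwh).symm⟩
      intro hmem
      apply hwni
      rcases hmem with hmem | hmem
      · left; rw [hemb w hwh, hmem]
      · right; exact ⟨_, hmem, (hemb w hwh).symm⟩
    · rintro ⟨m, ⟨hmni, u, hu, hdu⟩, rfl⟩
      have hum : u ≠ m := by
        intro hEq; subst hEq; exact hD u u hdu hdu
      have hpu : p (x (Fin.castLE hhn u)) < h := by rw [hpemb u]; exact u.isLt
      have hpm : p (x (Fin.castLE hhn m)) < h := by rw [hpemb m]; exact m.isLt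
      have h1 : (⟨p (x (Fin.castLE hhn u)), hpu⟩ : Fin h) = u := Fin.ext (hpemb u)
      have h2 : (⟨p (x (Fin.castLE hhn m)), hpm⟩ : Fin h) = m := Fin.ext (hpemb m)
      refine ⟨?_, x (Fin.castLE hhn u), ⟨u, hu, rfl⟩,
        (hP1 u m).2 (Or.inl hdu), Or.inl ⟨hpu, hpm, by rw [h1, h2]; exact hdu⟩⟩
      intro hmem
      apply hmni
      rcases hmem with hmem | ⟨k, hk, hke⟩
      · left; exact embinj hmem
      · right; rw [← embinj hke.symm] at hk; exact hk
  refine ⟨D', ⟨?_, ?_⟩, ?_⟩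
  · -- OrientedGraph
    rintro u v ⟨hadj, hc⟩ ⟨hadj', hc'⟩
    rcases hc with ⟨hu, hv, hd⟩ | ⟨hnot, hlt⟩ <;>
      rcases hc' with ⟨hu', hv', hd'⟩ | ⟨hnot', hlt'⟩
    · exact hD _ _ hd hd'
    · exact hnot' ⟨hv, hu⟩
    · exact hnot ⟨hv', hu'⟩
    · exact lt_asymm hlt hlt'
  · -- orientation of G
    intro u v
    constructor
    · intro hadj
      have hne : u ≠ v := G.ne_of_adj hadj
      have hpne : p u ≠ p v := fun hh => hne (hpinj u v hh)
      by_cases hc : p u < h ∧ p v < h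
      · obtain ⟨hu, hv⟩ := hc
        have hadj' : G.Adj (x (Fin.castLE hhn ⟨p u, hu⟩)) (x (Fin.castLE hhn ⟨p v, hv⟩)) := by
          rw [← hemb u hu, ← hemb v hv]; exact hadj
        rcases (hP1 ⟨p u, hu⟩ ⟨p v, hv⟩).1 hadj' with hd | hd
        · exact Or.inl ⟨hadj, Or.inl ⟨hu, hv, hd⟩⟩
        · exact Or.inr ⟨hadj.symm, Or.inl ⟨hv, hu, hd⟩⟩
      · rcases lt_or_gt_of_ne hpne with hlt | hlt
        · exact Or.inr ⟨hadj.symm, Or.inr ⟨fun hc2 => hc ⟨hc2.2, hc2.1⟩, hlt⟩⟩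
        · exact Or.inl ⟨hadj, Or.inr ⟨hc, hlt⟩⟩
    · rintro (⟨hadj, _⟩ | ⟨hadj, _⟩)
      · exact hadj
      · exact hadj.symm
  · -- no Seymour vertex
    intro v
    by_cases hvh : p v < h
    · -- embedded vertex
      have hv' : v = x (Fin.castLE hhn ⟨p v, hvh⟩) := hemb v hvh
      rw [SeymourVertex, hv', hN1h, hN2h,
        Set.ncard_image_of_injective _ embinj, Set.ncard_image_of_injective _ embinj]
      exact hno ⟨p v, hvh⟩
    · push_neg at hvh
      have hN1 : outNbr D' v = {w | G.Adj v w ∧ p w < p v} := by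
        ext w
        simp only [outNbr, Set.mem_setOf_eq, hD']
        constructor
        · rintro ⟨hne, hadj, hcase⟩
          refine ⟨hadj, ?_⟩
          rcases hcase with ⟨hu, _, _⟩ | ⟨_, hlt⟩
          · omega
          · exact hlt
        · rintro ⟨hadj, hlt⟩
          exact ⟨fun he => absurd (he ▸ hlt) (lt_irrefl _), hadj,
            Or.inr ⟨fun hc => absurd hc.1 (by omega), hlt⟩⟩
      have hxi : x (x.symm v) = v := x.apply_symm_apply v
      have hset : {w | G.Adj (x (x.symm v)) w ∧ ∃ j : Fin n, j < x.symm v ∧ x j = w}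
          = outNbr D' v := by
        rw [hN1]
        ext w
        simp only [Set.mem_setOf_eq, hxi]
        constructor
        · rintro ⟨hadj, j, hj, rfl⟩
          refine ⟨hadj, ?_⟩
          have hpj : p (x j) = (j : ℕ) := by
            simp only [hp, Equiv.symm_apply_apply]
          rw [hpj]
          exact hj
        · rintro ⟨hadj, hlt⟩
          exact ⟨hadj, x.symm w, hlt, x.apply_symm_apply w⟩
      have hP2' := hP2 (x.symm v) hvh
      rw [hset] at hP2'
      set d : ℕ := (outNbr D' v).ncard with hd
      have hdlb : p v + 1 ≤ 2 * d := by
        have h2 : ((p v : ℝ) + 1) ≤ 2 * d := by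
          rw [div_le_iff₀ (by norm_num : (0:ℝ) < 2)] at hP2'
          linarith
        exact_mod_cast h2
      set S : Set (Fin n) := {w | p w < p v} with hS
      have hScard : S.ncard = p v := by
        have hST : S = x '' {j : Fin n | j < x.symm v} := by
          ext w
          simp only [hS, Set.mem_setOf_eq, Set.mem_image]
          constructor
          · intro hw
            exact ⟨x.symm w, hw, x.apply_symm_apply w⟩
          · rintro ⟨j, hj, rfl⟩
            have hpj : p (x j) = (j : ℕ) := by
              simp only [hp, Equiv.symm_apply_apply]
            rw [hpj]
            exact hj
        rw [hST, Set.ncard_image_of_injective _ x.injective]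
        have : {j : Fin n | j < x.symm v} = ↑(Finset.Iio (x.symm v)) := by
          ext j; simp
        rw [this, Set.ncard_coe_finset, Fin.card_Iio]
      have hsub1 : outNbr D' v ⊆ S := by
        rw [hN1]
        rintro w ⟨_, hw⟩
        exact hw
      have hsub2 : outNbr2 D' v ⊆ S \ outNbr D' v := by
        rintro w ⟨hni, u, hu, hdu⟩
        refine ⟨?_, fun hw => hni (Set.mem_insert_of_mem _ hw)⟩
        have hpu : p u < p v := hsub1 hu
        obtain ⟨_, hcase⟩ := hdu
        rcases hcase with ⟨_, hwh, _⟩ | ⟨_, hlt⟩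
        · exact lt_of_lt_of_le hwh hvh
        · exact hlt.trans hpu
      have hN2le : (outNbr2 D' v).ncard ≤ p v - d := by
        calc (outNbr2 D' v).ncard ≤ (S \ outNbr D' v).ncard :=
              Set.ncard_le_ncard hsub2 (Set.toFinite _)
          _ = S.ncard - d := Set.ncard_diff hsub1 (Set.toFinite _)
          _ = p v - d := by rw [hScard]
      rw [SeymourVertex, ← hd]
      omega
end

section
/- Let ε > 0 and let p = p(n) ∈ [0,1] satisfy p(n) ≤ (1 − ε) log n / n for all sufficiently large n. Then asymptotically almost surely, every orientation of the binomial random graph G(n,p) contains a Sullivan vertex. -/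
open Filter

/-!
Below the connectivity threshold, `G(n,p)` a.a.s. has an isolated vertex, and an isolated vertex
has empty inneighbourhood in every orientation, so it is a Sullivan vertex.

Isolated vertices are found by the second-moment method. If `X` counts them, then
`μ = E X = n (1-p)^(n-1)`, and since two distinct vertices are both isolated exactly when the
`2n - 3` possible edges at them are absent, Chebyshev's inequality gives
`P(X = 0) ≤ Var X / μ² ≤ 1/μ + p/(1-p)`. From `log (1-p) ≥ -p/(1-p)` and `n p ≤ (1-ε) log n`
we get `1/μ ≤ exp (n p/(1-p) - log n) ≤ n^(-ε/2)` eventually.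
-/

open Filter Topology Finset Real
open scoped Classical

theorem SimpleGraph.sum_edgeFinset_eq_sum_powerset {V M : Type*} [Fintype V] [DecidableEq V]
    [AddCommMonoid M] (f : Finset (Sym2 V) → M) :
    ∑ G : SimpleGraph V, f G.edgeFinset = ∑ S ∈ (⊤ : SimpleGraph V).edgeFinset.powerset, f S := by
  refine sum_nbij' (fun G => G.edgeFinset) (fun S => SimpleGraph.fromEdgeSet S)
    (fun G _ => mem_powerset.2 (SimpleGraph.edgeFinset_mono le_top)) (fun _ _ => mem_univ _)
    (fun G _ => by simp) (fun S hS => ?_) (fun _ _ => rfl)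
  apply coe_injective
  have hS : ∀ e ∈ S, ¬ e.IsDiag := fun e he => by
    simpa using (mem_powerset.1 hS he)
  ext e
  simpa using hS e

theorem SimpleGraph.isIsolated_iff_disjoint_incidenceFinset_top {V : Type*} [Fintype V]
    [DecidableEq V] (G : SimpleGraph V) [Fintype G.edgeSet] (v : V) :
    G.IsIsolated v ↔ Disjoint G.edgeFinset ((⊤ : SimpleGraph V).incidenceFinset v) := by
  rw [Finset.disjoint_left, SimpleGraph.IsIsolated]
  refine ⟨fun h e he hv => ?_, fun h w hvw => h (a := s(v, w)) (G.mem_edgeFinset.2 hvw) ?_⟩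
  · induction e using Sym2.ind with
    | _ a b =>
      simp only [SimpleGraph.mem_edgeFinset, SimpleGraph.mem_edgeSet,
        SimpleGraph.mem_incidenceFinset, SimpleGraph.incidenceSet, Set.mem_ofPred_eq,
        Sym2.mem_iff] at he hv
      rcases hv.2 with rfl | rfl
      · exact h b he
      · exact h a he.symm
  · simpa [SimpleGraph.incidenceSet] using hvw.ne

theorem SimpleGraph.card_incidenceFinset_top {V : Type*} [Fintype V] [DecidableEq V] (v : V) :
    #((⊤ : SimpleGraph V).incidenceFinset v) = Fintype.card V - 1 := by
  rw [SimpleGraph.card_incidenceFinset_eq_degree, ← SimpleGraph.complete_graph_degree]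

theorem SimpleGraph.card_incidenceFinset_top_union {V : Type*} [Fintype V] [DecidableEq V]
    {u v : V} (huv : u ≠ v) :
    #((⊤ : SimpleGraph V).incidenceFinset u ∪ (⊤ : SimpleGraph V).incidenceFinset v) =
      2 * Fintype.card V - 3 := by
  have hinter : (⊤ : SimpleGraph V).incidenceFinset u ∩ (⊤ : SimpleGraph V).incidenceFinset v =
      {s(u, v)} := by
    apply coe_injective
    push_cast
    exact SimpleGraph.incidenceSet_inter_incidenceSet_of_adj _ huv
  have h2 : 2 ≤ Fintype.card V := Fintype.one_lt_card_iff.2 ⟨u, v, huv⟩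
  have := card_union_add_card_inter ((⊤ : SimpleGraph V).incidenceFinset u)
    ((⊤ : SimpleGraph V).incidenceFinset v)
  rw [hinter, SimpleGraph.card_incidenceFinset_top, SimpleGraph.card_incidenceFinset_top,
    card_singleton] at this
  omega

theorem sullivanVertex_of_isIsolated {V : Type*} {D : V → V → Prop} {G : SimpleGraph V}
    (hD : Orients D G) {v : V} (hv : G.IsIsolated v) : SullivanVertex D v := by
  have : inNbr D v = ∅ :=
    Set.eq_empty_of_forall_notMem fun w hw => hv w ((hD.2 w v).2 (Or.inl hw.2)).symm
  simp [SullivanVertex, this]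

section Gnp

variable {n : ℕ} {p : ℝ}

noncomputable def gnpWeight (n : ℕ) (p : ℝ) (G : SimpleGraph (Fin n)) : ℝ :=
  p ^ G.edgeSet.ncard * (1 - p) ^ (n.choose 2 - G.edgeSet.ncard)

theorem gnpProb_eq_sum_ite (P : SimpleGraph (Fin n) → Prop) :
    gnpProb n p P = ∑ G, if P G then gnpWeight n p G else 0 := rfl

theorem gnpWeight_nonneg (hp0 : 0 ≤ p) (hp1 : p ≤ 1) (G : SimpleGraph (Fin n)) :
    0 ≤ gnpWeight n p G := by
  unfold gnpWeight
  have : 0 ≤ 1 - p := by linarith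
  positivity

theorem gnpProb_disjoint_edgeFinset {F : Finset (Sym2 (Fin n))}
    (hF : F ⊆ (⊤ : SimpleGraph (Fin n)).edgeFinset) :
    gnpProb n p (fun G => Disjoint G.edgeFinset F) = (1 - p) ^ #F := by
  set K := (⊤ : SimpleGraph (Fin n)).edgeFinset
  have hK : #K = n.choose 2 := by
    rw [SimpleGraph.card_edgeFinset_top_eq_card_choose_two, Fintype.card_fin]
  have hweight : ∀ G : SimpleGraph (Fin n),
      gnpWeight n p G = p ^ #G.edgeFinset * (1 - p) ^ (#K - #G.edgeFinset) := fun G => by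
    rw [gnpWeight, hK, ← SimpleGraph.coe_edgeFinset, Set.ncard_coe_finset]
  have hfilter : K.powerset.filter (Disjoint · F) = (K \ F).powerset := by
    ext S
    simp [subset_sdiff]
  calc gnpProb n p (fun G => Disjoint G.edgeFinset F)
      = ∑ S ∈ K.powerset, if Disjoint S F then p ^ #S * (1 - p) ^ (#K - #S) else 0 := by
        simp only [gnpProb_eq_sum_ite, hweight]
        exact SimpleGraph.sum_edgeFinset_eq_sum_powerset
          (fun S => if Disjoint S F then p ^ #S * (1 - p) ^ (#K - #S) else 0)
    _ = ∑ S ∈ (K \ F).powerset, (1 - p) ^ #F * (p ^ #S * (1 - p) ^ (#(K \ F) - #S)) := by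
        rw [← sum_filter, hfilter]
        refine sum_congr rfl fun S hS => ?_
        have hSK := card_le_card (mem_powerset.1 hS)
        have hKF := card_sdiff_of_subset hF
        have hFK := card_le_card hF
        rw [mul_left_comm, ← pow_add]
        congr 2
        omega
    _ = (1 - p) ^ #F := by
        rw [← mul_sum, sum_pow_mul_eq_add_pow]
        simp

theorem sum_gnpWeight : ∑ G, gnpWeight n p G = 1 := by
  simpa [gnpProb_eq_sum_ite] using gnpProb_disjoint_edgeFinset (n := n) (p := p) (empty_subset _)

theorem gnpProb_add_gnpProb_not (P : SimpleGraph (Fin n) → Prop) :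
    gnpProb n p P + gnpProb n p (fun G => ¬ P G) = 1 := by
  rw [gnpProb_eq_sum_ite, gnpProb_eq_sum_ite, ← sum_add_distrib,
    ← sum_gnpWeight (n := n) (p := p)]
  refine sum_congr rfl fun G _ => ?_
  split_ifs <;> simp

theorem gnpProb_mono (hp0 : 0 ≤ p) (hp1 : p ≤ 1) {P Q : SimpleGraph (Fin n) → Prop}
    (h : ∀ G, P G → Q G) : gnpProb n p P ≤ gnpProb n p Q := by
  refine sum_le_sum fun G _ => ?_
  split_ifs with hP hQ hQ
  · rfl
  · exact absurd (h G hP) hQ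
  · exact gnpWeight_nonneg hp0 hp1 G
  · rfl

theorem gnpProb_le_one (hp0 : 0 ≤ p) (hp1 : p ≤ 1) (P : SimpleGraph (Fin n) → Prop) :
    gnpProb n p P ≤ 1 := by
  linarith [gnpProb_add_gnpProb_not (n := n) (p := p) P,
    gnpProb_mono hp0 hp1 (P := fun _ => False) (Q := fun G => ¬ P G) (fun _ h => h.elim),
    show gnpProb n p (fun _ => False) = 0 by simp [gnpProb]]

/-- Chebyshev's inequality `P(X = 0) (E X)² ≤ Var X`, for `X` the number of events `A i` that
occur. -/
theorem gnpProb_forall_not_mul_sq_le (hp0 : 0 ≤ p) (hp1 : p ≤ 1) {ι : Type*} [Fintype ι]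
    (A : ι → SimpleGraph (Fin n) → Prop) :
    gnpProb n p (fun G => ∀ i, ¬ A i G) * (∑ i, gnpProb n p (A i)) ^ 2 ≤
      ∑ i, ∑ j, gnpProb n p (fun G => A i G ∧ A j G) - (∑ i, gnpProb n p (A i)) ^ 2 := by
  set w := gnpWeight n p
  set X : SimpleGraph (Fin n) → ℝ := fun G => ∑ i, if A i G then 1 else 0
  set μ := ∑ i, gnpProb n p (A i)
  have hprob : ∀ P : SimpleGraph (Fin n) → Prop,
      gnpProb n p P = ∑ G, w G * if P G then 1 else 0 := fun P => by
    simp [gnpProb_eq_sum_ite, w]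
  have hmean : ∑ G, w G * X G = μ := by
    simp only [X, μ, hprob, mul_sum]
    exact Finset.sum_comm
  have hsq : ∑ G, w G * X G ^ 2 = ∑ i, ∑ j, gnpProb n p (fun G => A i G ∧ A j G) := by
    have hX2 : ∀ G, X G ^ 2 = ∑ i, ∑ j, if A i G ∧ A j G then 1 else 0 := fun G => by
      simp only [X, sq, sum_mul_sum, ite_zero_mul_ite_zero, mul_one]
    simp only [hX2, mul_sum, hprob]
    rw [sum_comm]
    -- `convert` reconciles the `Decidable` instances of `A i G ∧ A j G` on the two sides
    exact sum_congr rfl fun i _ => by convert Finset.sum_comm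
  have hvar : ∑ G, w G * (X G - μ) ^ 2 =
      ∑ i, ∑ j, gnpProb n p (fun G => A i G ∧ A j G) - μ ^ 2 := by
    have : ∑ G, w G * (X G - μ) ^ 2 =
        ∑ G, w G * X G ^ 2 - 2 * μ * ∑ G, w G * X G + μ ^ 2 * ∑ G, w G := by
      simp only [mul_sum, ← sum_sub_distrib, ← sum_add_distrib]
      exact sum_congr rfl fun G _ => by ring
    rw [this, hmean, hsq, sum_gnpWeight]
    ring
  rw [← hvar, hprob, sum_mul]
  refine sum_le_sum fun G _ => ?_
  split_ifs with h
  · have hX : X G = 0 := by simp [X, h]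
    simp [hX]
  · simp only [mul_zero, zero_mul]
    exact mul_nonneg (gnpWeight_nonneg hp0 hp1 G) (sq_nonneg _)

theorem gnpProb_isIsolated (v : Fin n) :
    gnpProb n p (·.IsIsolated v) = (1 - p) ^ (n - 1) := by
  simp only [SimpleGraph.isIsolated_iff_disjoint_incidenceFinset_top]
  rw [gnpProb_disjoint_edgeFinset (SimpleGraph.incidenceFinset_subset _ v),
    SimpleGraph.card_incidenceFinset_top, Fintype.card_fin]

theorem gnpProb_isIsolated_and {u v : Fin n} (huv : u ≠ v) :
    gnpProb n p (fun G => G.IsIsolated u ∧ G.IsIsolated v) = (1 - p) ^ (2 * n - 3) := by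
  simp only [SimpleGraph.isIsolated_iff_disjoint_incidenceFinset_top, ← disjoint_union_right]
  rw [gnpProb_disjoint_edgeFinset (union_subset (SimpleGraph.incidenceFinset_subset _ u)
    (SimpleGraph.incidenceFinset_subset _ v)), SimpleGraph.card_incidenceFinset_top_union huv,
    Fintype.card_fin]

theorem sum_gnpProb_isIsolated :
    ∑ v : Fin n, gnpProb n p (·.IsIsolated v) = n * (1 - p) ^ (n - 1) := by
  simp [gnpProb_isIsolated]

theorem sum_sum_gnpProb_isIsolated_and :
    ∑ u : Fin n, ∑ v : Fin n, gnpProb n p (fun G => G.IsIsolated u ∧ G.IsIsolated v) =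
      n * (1 - p) ^ (n - 1) + n * (n - 1) * (1 - p) ^ (2 * n - 3) := by
  have hrow : ∀ u : Fin n, ∑ v, gnpProb n p (fun G => G.IsIsolated u ∧ G.IsIsolated v) =
      (1 - p) ^ (n - 1) + (n - 1) * (1 - p) ^ (2 * n - 3) := fun u => by
    rw [← add_sum_erase _ _ (mem_univ u)]
    simp only [and_self, gnpProb_isIsolated]
    rw [sum_congr rfl fun v hv => gnpProb_isIsolated_and (ne_of_mem_erase hv).symm]
    simp [card_erase_of_mem, Nat.cast_sub (Fin.pos u)]
  simp only [hrow, sum_const, card_univ, Fintype.card_fin, nsmul_eq_mul]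
  ring

theorem gnpProb_not_exists_isIsolated_le (hn : 2 ≤ n) (hp0 : 0 ≤ p) (hp1 : p < 1) :
    gnpProb n p (fun G => ¬ ∃ v, G.IsIsolated v) ≤ 1 / (n * (1 - p) ^ (n - 1)) + p / (1 - p) := by
  have h := gnpProb_forall_not_mul_sq_le hp0 hp1.le (fun (v : Fin n) G => G.IsIsolated v)
  simp only [← not_exists] at h
  rw [sum_gnpProb_isIsolated, sum_sum_gnpProb_isIsolated_and] at h
  obtain ⟨m, rfl⟩ : ∃ m, n = m + 2 := ⟨n - 2, by omega⟩
  rw [show 2 * (m + 2) - 3 = 2 * m + 1 by omega] at h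
  rw [show m + 2 - 1 = m + 1 by omega] at h ⊢
  set q := 1 - p with hq
  set N : ℝ := ((m + 2 : ℕ) : ℝ)
  set a := q ^ (2 * m + 1)
  set μ := N * q ^ (m + 1)
  have hq0 : 0 < q := by linarith
  have hμ : 0 < μ := by positivity
  have hμsq : μ ^ 2 = N ^ 2 * a * q := by
    simp only [μ, a]
    ring
  have hvar : N * (N - 1) * a - μ ^ 2 ≤ N ^ 2 * a * p := by
    have : 0 ≤ N * a := by positivity
    rw [hμsq, hq]
    nlinarith
  have hbound : 1 / μ + p / q = (μ + N ^ 2 * a * p) / μ ^ 2 := by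
    have hN : 0 < N := by positivity
    have ha : 0 < a := by positivity
    rw [add_div, pow_two, div_mul_cancel_left₀ hμ.ne', one_div, ← pow_two, hμsq]
    field_simp
  rw [hbound, le_div_iff₀ (by positivity)]
  linarith

end Gnp

theorem one_div_mul_one_sub_pow_le_exp {n : ℕ} {p : ℝ} (hn : 0 < n) (hp0 : 0 ≤ p) (hp1 : p < 1) :
    1 / (n * (1 - p) ^ (n - 1)) ≤ exp (n * p / (1 - p) - log n) := by
  have hq0 : 0 < 1 - p := by linarith
  have hlog : -(p / (1 - p)) ≤ log (1 - p) := by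
    have := one_sub_inv_le_log_of_pos hq0
    rwa [show 1 - (1 - p)⁻¹ = -(p / (1 - p)) by field_simp; ring] at this
  have hpow : exp (-(n * p / (1 - p))) ≤ (1 - p) ^ (n - 1) := calc
    exp (-(n * p / (1 - p))) = exp (n * -(p / (1 - p))) := by ring_nf
    _ ≤ exp (n * log (1 - p)) := exp_le_exp.2 (mul_le_mul_of_nonneg_left hlog n.cast_nonneg)
    _ = (1 - p) ^ n := by rw [exp_nat_mul, exp_log hq0]
    _ ≤ (1 - p) ^ (n - 1) := pow_le_pow_of_le_one hq0.le (by linarith) (Nat.sub_le n 1)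
  calc 1 / (n * (1 - p) ^ (n - 1)) ≤ 1 / (n * exp (-(n * p / (1 - p)))) := by gcongr
    _ = exp (n * p / (1 - p) - log n) := by
      rw [exp_sub, exp_log (Nat.cast_pos.2 hn), exp_neg]
      field_simp

theorem tendsto_zero_of_le_mul_log_div {c : ℝ} {p : ℕ → ℝ} (hp0 : ∀ n, 0 ≤ p n)
    (hub : ∀ᶠ n : ℕ in atTop, p n ≤ c * log n / n) : Tendsto p atTop (𝓝 0) := by
  have hlog : Tendsto (fun n : ℕ => log n / n) atTop (𝓝 0) :=
    isLittleO_log_id_atTop.tendsto_div_nhds_zero.comp tendsto_natCast_atTop_atTop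
  refine squeeze_zero' (Eventually.of_forall hp0) hub ?_
  simpa [mul_div_assoc] using hlog.const_mul c

theorem tendsto_exp_mul_div_one_sub_sub_log {ε : ℝ} (hε : 0 < ε) {p : ℕ → ℝ}
    (hp : Tendsto p atTop (𝓝 0)) (hub : ∀ᶠ n : ℕ in atTop, p n ≤ (1 - ε) * log n / n) :
    Tendsto (fun n : ℕ => exp (n * p n / (1 - p n) - log n)) atTop (𝓝 0) := by
  have hratio : ∀ᶠ n in atTop, (1 - ε) / (1 - p n) ≤ 1 - ε / 2 := by
    have : Tendsto (fun n => (1 - ε) / (1 - p n)) atTop (𝓝 ((1 - ε) / (1 - 0))) :=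
      tendsto_const_nhds.div (tendsto_const_nhds.sub hp) (by norm_num)
    exact this.eventually_le_const (by norm_num; linarith)
  have hexponent : ∀ᶠ n : ℕ in atTop, n * p n / (1 - p n) - log n ≤ -(ε / 2) * log n := by
    filter_upwards [hub, hratio, hp.eventually_lt_const one_pos, eventually_gt_atTop 0]
      with n hle hr hp1 hn
    have hq : 0 < 1 - p n := by linarith
    have hlog : 0 ≤ log n := log_natCast_nonneg n
    have hnp : n * p n ≤ (1 - ε) * log n := by
      rwa [le_div_iff₀ (by positivity), mul_comm] at hle
    calc n * p n / (1 - p n) - log n ≤ (1 - ε) * log n / (1 - p n) - log n := by gcongr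
      _ = (1 - ε) / (1 - p n) * log n - log n := by ring
      _ ≤ (1 - ε / 2) * log n - log n := by gcongr
      _ = -(ε / 2) * log n := by ring
  have hlog : Tendsto (fun n : ℕ => -(ε / 2) * log n) atTop atBot :=
    (tendsto_log_atTop.comp tendsto_natCast_atTop_atTop).const_mul_atTop_of_neg (by linarith)
  exact tendsto_exp_atBot.comp (tendsto_atBot_mono' atTop hexponent hlog)

/-- if `ε > 0` and `p = p(n) ∈ [0,1]` satisfies
`p(n) ≤ (1-ε) log n / n` for all large `n`, then a.a.s. every orientation of `G(n,p)`
contains a Sullivan vertex. -/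
theorem stmt_14 (ε : ℝ) (hε : 0 < ε) (p : ℕ → ℝ) (hp : ∀ n, p n ∈ Set.Icc (0 : ℝ) 1)
    (hub : ∀ᶠ n : ℕ in atTop, p n ≤ (1 - ε) * Real.log n / n) :
    Tendsto (fun n => gnpProb n (p n) (fun G =>
        ∀ D : Fin n → Fin n → Prop, Orients D G → ∃ v, SullivanVertex D v))
      atTop (nhds 1) := by
  have hp0 : ∀ n, 0 ≤ p n := fun n => (hp n).1
  have hp_lim : Tendsto p atTop (𝓝 0) := tendsto_zero_of_le_mul_log_div hp0 hub
  have herr : Tendsto (fun n : ℕ => exp (n * p n / (1 - p n) - log n) + p n / (1 - p n))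
      atTop (𝓝 0) := by
    have hratio : Tendsto (fun n => p n / (1 - p n)) atTop (𝓝 (0 / (1 - 0))) :=
      hp_lim.div (tendsto_const_nhds.sub hp_lim) (by norm_num)
    simpa using (tendsto_exp_mul_div_one_sub_sub_log hε hp_lim hub).add hratio
  refine tendsto_of_tendsto_of_tendsto_of_le_of_le' (by simpa using herr.const_sub 1)
    tendsto_const_nhds ?_ (Eventually.of_forall fun n => gnpProb_le_one (hp0 n) (hp n).2 _)
  filter_upwards [eventually_ge_atTop 2, hp_lim.eventually_lt_const one_pos] with n hn hp1
  calc 1 - (exp (n * p n / (1 - p n) - log n) + p n / (1 - p n))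
      ≤ 1 - gnpProb n (p n) (fun G => ¬ ∃ v, G.IsIsolated v) := by
        gcongr
        exact (gnpProb_not_exists_isIsolated_le hn (hp0 n) hp1).trans
          (add_le_add_left (one_div_mul_one_sub_pow_le_exp (by omega) (hp0 n) hp1) _)
    _ = gnpProb n (p n) (fun G => ∃ v, G.IsIsolated v) := by
        linarith [gnpProb_add_gnpProb_not (n := n) (p := p n) (fun G => ∃ v, G.IsIsolated v)]
    _ ≤ _ := gnpProb_mono (hp0 n) (hp n).2 fun G ⟨v, hv⟩ D hD =>
        ⟨v, sullivanVertex_of_isIsolated hD hv⟩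
end

section
/- Let n ≥ 3 be an integer and let d > 0 be a real number. Let G be a simple graph on n vertices such that: (a) every pair of distinct vertices of G is joined by fewer than d/2400 paths of length 2; (b) every vertex of G has degree at most 4d; (c) every set A of ⌈n/3⌉ vertices of G induces at least nd/25 edges. Then every orientation of G contains a vertex v with |N2(v)| > 4d; in particular, every orientation of G contains a Sullivan vertex. -/
open Filter

/-!
Suppose every vertex had `|N2(v)| ≤ 4d`. An arc inside `N1(v)` joins two vertices whose
neighbours in `N1(v)` are common neighbours with `v`, and an arc leaving `N1(v)` ends in `N2(v)`;
double counting against the codegree bound gives `∑_{u ∈ N1(v)} d⁺(u) ≤ d²/400` for every `v`.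
Hence every vertex has at most `3d/80` out-neighbours of out-degree `≥ d/15`, so these "big"
vertices have total in-degree at most `3dn/80`. A set of `⌈n/3⌉` vertices of small out-degree
spans at most `⌈n/3⌉ d/15` edges, one of big vertices at most `3dn/80`; both are below `nd/25`.
-/

open Finset
open scoped Classical

variable {V : Type*} {D : V → V → Prop} {G : SimpleGraph V}

lemma SimpleGraph.setOf_adj_adj_eq_commonNeighbors (G : SimpleGraph V) (u v : V) :
    {w | w ≠ u ∧ w ≠ v ∧ G.Adj u w ∧ G.Adj w v} = G.commonNeighbors u v := by
  ext w
  simp only [Set.mem_ofPred_eq, SimpleGraph.mem_commonNeighbors]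
  constructor
  · rintro ⟨-, -, huw, hwv⟩
    exact ⟨huw, hwv.symm⟩
  · rintro ⟨huw, hvw⟩
    exact ⟨huw.ne', hvw.ne', huw, hvw.symm⟩

namespace Orients

lemma adj (hD : Orients D G) {u w : V} (h : D u w) : G.Adj u w := (hD.2 u w).2 (Or.inl h)

lemma flip (hD : Orients D G) : Orients (flip D) G :=
  ⟨fun u v h => hD.1 v u h, fun u v => (hD.2 u v).trans or_comm⟩

lemma outNbr_subset_neighborSet (hD : Orients D G) (v : V) : outNbr D v ⊆ G.neighborSet v :=
  fun _ hw => hD.adj hw.2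

lemma inNbr_subset_neighborSet (hD : Orients D G) (v : V) : inNbr D v ⊆ G.neighborSet v :=
  hD.flip.outNbr_subset_neighborSet v

lemma card_filter_add_card_filter_eq (hD : Orients D G) (S : Finset V) (w : V) :
    #{x ∈ S | D w x} + #{x ∈ S | D x w} = #{x ∈ S | G.Adj w x} := by
  rw [← card_union_of_disjoint (disjoint_filter.2 fun x _ h h' => hD.1 _ _ h h'), ← filter_or]
  simp only [hD.2 w]

variable [Fintype V]

lemma ncard_outNbr (hD : Orients D G) (v : V) : (outNbr D v).ncard = #{w | D v w} := by
  rw [← Set.ncard_coe_finset, coe_filter_univ]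
  congr 1
  ext w
  exact ⟨fun h => h.2, fun h => ⟨(hD.adj h).ne', h⟩⟩

lemma ncard_inNbr (hD : Orients D G) (v : V) : (inNbr D v).ncard = #{w | D w v} :=
  hD.flip.ncard_outNbr v

lemma eIn_le_sum_ncard_outNbr (hD : Orients D G) (A : Finset V) :
    eIn G A ≤ ∑ a ∈ A, (outNbr D a).ncard := by
  have hsub : {e | e ∈ G.edgeSet ∧ ∀ v ∈ e, v ∈ (A : Set V)} ⊆
      ↑(A.biUnion fun a => (outNbr D a).toFinset.image fun w => s(a, w)) := by
    rintro ⟨u, w⟩ ⟨hadj, hA⟩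
    have hu : u ∈ A := hA u (Sym2.mem_mk_left u w)
    have hw : w ∈ A := hA w (Sym2.mem_mk_right u w)
    simp only [coe_biUnion, coe_image, Set.coe_toFinset, Set.mem_iUnion, Set.mem_image]
    rcases (hD.2 u w).1 hadj with h | h
    · exact ⟨u, hu, w, ⟨(hD.adj h).ne', h⟩, rfl⟩
    · exact ⟨w, hw, u, ⟨(hD.adj h).ne', h⟩, Sym2.eq_swap⟩
  calc eIn G A ≤ #(A.biUnion fun a => (outNbr D a).toFinset.image fun w => s(a, w)) :=
        (Set.ncard_le_ncard hsub (finite_toSet _)).trans (Set.ncard_coe_finset _).le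
    _ ≤ ∑ a ∈ A, #((outNbr D a).toFinset.image fun w => s(a, w)) := card_biUnion_le
    _ ≤ ∑ a ∈ A, (outNbr D a).ncard := sum_le_sum fun a _ =>
        card_image_le.trans (Set.ncard_eq_toFinset_card' _).ge

lemma eIn_le_sum_ncard_inNbr (hD : Orients D G) (A : Finset V) :
    eIn G A ≤ ∑ a ∈ A, (inNbr D a).ncard :=
  hD.flip.eIn_le_sum_ncard_outNbr A

lemma two_mul_sum_card_filter_le_sum_ncard_commonNeighbors (hD : Orients D G)
    {S : Finset V} {v : V} (hS : ∀ x ∈ S, G.Adj v x) :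
    2 * ∑ u ∈ S, #{w ∈ S | D u w} ≤ ∑ w ∈ S, (G.commonNeighbors w v).ncard := by
  have hswap : ∑ u ∈ S, #{w ∈ S | D u w} = ∑ w ∈ S, #{u ∈ S | D u w} :=
    sum_card_bipartiteAbove_eq_sum_card_bipartiteBelow D
  calc 2 * ∑ u ∈ S, #{w ∈ S | D u w}
        = ∑ w ∈ S, (#{x ∈ S | D w x} + #{x ∈ S | D x w}) := by
          rw [sum_add_distrib, ← hswap, two_mul]
    _ = ∑ w ∈ S, #{x ∈ S | G.Adj w x} :=
          sum_congr rfl fun w _ => hD.card_filter_add_card_filter_eq S w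
    _ ≤ ∑ w ∈ S, (G.commonNeighbors w v).ncard := sum_le_sum fun w _ => by
          rw [← Set.ncard_coe_finset]
          refine Set.ncard_le_ncard (fun x hx => ?_) (Set.toFinite _)
          rw [coe_filter] at hx
          exact ⟨hx.2, hS x hx.1⟩

lemma card_filter_eq_outNbr_add_outNbr2 (hD : Orients D G) {u v : V} (hvu : D v u) :
    #{w | D u w} = #{w ∈ (outNbr D v).toFinset | D u w} +
      #{w ∈ (outNbr2 D v).toFinset | D u w} := by
  have hdisj : Disjoint (outNbr D v).toFinset (outNbr2 D v).toFinset :=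
    Set.disjoint_toFinset.2 <| Set.disjoint_right.2 fun _ hw => fun h => hw.1 (Or.inr h)
  rw [← card_union_of_disjoint (disjoint_filter_filter hdisj)]
  congr 1
  ext w
  simp only [mem_union, mem_filter, mem_univ, true_and, Set.mem_toFinset]
  refine ⟨fun huw => ?_, by rintro (⟨-, h⟩ | ⟨-, h⟩) <;> exact h⟩
  by_cases hw : w ∈ outNbr D v
  · exact Or.inl ⟨hw, huw⟩
  · have hwv : w ≠ v := by
      rintro rfl
      exact hD.1 _ _ hvu huw
    exact Or.inr ⟨⟨by simp [hwv, hw], u, ⟨(hD.adj hvu).ne', hvu⟩, huw⟩, huw⟩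

lemma sum_card_filter_outNbr2_le (hD : Orients D G) (v : V) :
    ∑ u ∈ (outNbr D v).toFinset, #{w ∈ (outNbr2 D v).toFinset | D u w} ≤
      ∑ w ∈ (outNbr2 D v).toFinset, (G.commonNeighbors w v).ncard := by
  refine (sum_card_bipartiteAbove_eq_sum_card_bipartiteBelow D).trans_le <|
    sum_le_sum fun w _ => ?_
  rw [← Set.ncard_coe_finset]
  refine Set.ncard_le_ncard (fun u hu => ?_) (Set.toFinite _)
  rw [mem_coe, mem_bipartiteBelow, Set.mem_toFinset] at hu
  exact ⟨(hD.adj hu.2).symm, hD.adj hu.1.2⟩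

lemma two_mul_sum_ncard_outNbr_le (hD : Orients D G) (v : V) :
    2 * ∑ u ∈ (outNbr D v).toFinset, (outNbr D u).ncard ≤
      ∑ w ∈ (outNbr D v).toFinset, (G.commonNeighbors w v).ncard +
        2 * ∑ w ∈ (outNbr2 D v).toFinset, (G.commonNeighbors w v).ncard := by
  have hsplit : ∑ u ∈ (outNbr D v).toFinset, (outNbr D u).ncard =
      ∑ u ∈ (outNbr D v).toFinset, #{w ∈ (outNbr D v).toFinset | D u w} +
        ∑ u ∈ (outNbr D v).toFinset, #{w ∈ (outNbr2 D v).toFinset | D u w} := by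
    rw [← sum_add_distrib]
    refine sum_congr rfl fun u hu => ?_
    rw [hD.ncard_outNbr, hD.card_filter_eq_outNbr_add_outNbr2 (Set.mem_toFinset.1 hu).2]
  have hinside := hD.two_mul_sum_card_filter_le_sum_ncard_commonNeighbors
    (S := (outNbr D v).toFinset) fun x hx => hD.adj (Set.mem_toFinset.1 hx).2
  have houtside := hD.sum_card_filter_outNbr2_le v
  omega

lemma sum_ncard_outNbr_le (hD : Orients D G) {c Δ : ℝ} (hc : 0 ≤ c)
    (hcod : ∀ u w, u ≠ w → ((G.commonNeighbors u w).ncard : ℝ) ≤ c) {v : V}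
    (hdeg : ((G.neighborSet v).ncard : ℝ) ≤ Δ) (hN2 : ((outNbr2 D v).ncard : ℝ) ≤ Δ) :
    ∑ u ∈ (outNbr D v).toFinset, ((outNbr D u).ncard : ℝ) ≤ 3 * Δ * c / 2 := by
  have hcount : 2 * ∑ u ∈ (outNbr D v).toFinset, ((outNbr D u).ncard : ℝ) ≤
      ∑ w ∈ (outNbr D v).toFinset, ((G.commonNeighbors w v).ncard : ℝ) +
        2 * ∑ w ∈ (outNbr2 D v).toFinset, ((G.commonNeighbors w v).ncard : ℝ) := by
    exact_mod_cast hD.two_mul_sum_ncard_outNbr_le v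
  have hN1 : ((outNbr D v).ncard : ℝ) ≤ Δ :=
    le_trans (by exact_mod_cast Set.ncard_le_ncard (hD.outNbr_subset_neighborSet v)) hdeg
  have hS : ∑ w ∈ (outNbr D v).toFinset, ((G.commonNeighbors w v).ncard : ℝ) ≤ Δ * c := by
    refine (sum_le_card_nsmul _ _ c fun w hw => hcod w v (Set.mem_toFinset.1 hw).1).trans ?_
    rw [nsmul_eq_mul, ← Set.ncard_eq_toFinset_card']
    exact mul_le_mul_of_nonneg_right hN1 hc
  have hT : ∑ w ∈ (outNbr2 D v).toFinset, ((G.commonNeighbors w v).ncard : ℝ) ≤ Δ * c := by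
    refine (sum_le_card_nsmul _ _ c fun w hw => hcod w v ?_).trans ?_
    · rintro rfl
      exact (Set.mem_toFinset.1 hw).1 (Set.mem_insert w _)
    rw [nsmul_eq_mul, ← Set.ncard_eq_toFinset_card']
    exact mul_le_mul_of_nonneg_right hN2 hc
  linarith

lemma sum_ncard_inNbr_le (hD : Orients D G) {K t : ℝ} (ht : 0 < t)
    (hK : ∀ v, ∑ u ∈ (outNbr D v).toFinset, ((outNbr D u).ncard : ℝ) ≤ K) :
    ∑ b ∈ {u | t ≤ (outNbr D u).ncard}, ((inNbr D b).ncard : ℝ) ≤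
      Fintype.card V * (K / t) := by
  set B : Finset V := {u | t ≤ (outNbr D u).ncard}
  have hswap : ∑ b ∈ B, (inNbr D b).ncard = ∑ v, #{b ∈ B | D v b} := by
    simp_rw [hD.ncard_inNbr]
    exact (sum_card_bipartiteAbove_eq_sum_card_bipartiteBelow D).symm
  have hterm (v : V) : (#{b ∈ B | D v b} : ℝ) ≤ K / t := by
    rw [le_div_iff₀ ht, ← nsmul_eq_mul]
    calc #{b ∈ B | D v b} • t ≤ ∑ u ∈ {b ∈ B | D v b}, ((outNbr D u).ncard : ℝ) :=
          card_nsmul_le_sum _ _ _ fun u hu => (mem_filter.1 (mem_filter.1 hu).1).2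
      _ ≤ ∑ u ∈ (outNbr D v).toFinset, ((outNbr D u).ncard : ℝ) :=
          sum_le_sum_of_subset_of_nonneg
            (fun u hu =>
              Set.mem_toFinset.2 ⟨(hD.adj (mem_filter.1 hu).2).ne', (mem_filter.1 hu).2⟩)
            fun _ _ _ => by positivity
      _ ≤ K := hK v
  calc ∑ b ∈ B, ((inNbr D b).ncard : ℝ) = ∑ v, (#{b ∈ B | D v b} : ℝ) := by
        exact_mod_cast hswap
    _ ≤ ∑ _v : V, K / t := sum_le_sum fun v _ => hterm v
    _ = Fintype.card V * (K / t) := by rw [sum_const, card_univ, nsmul_eq_mul]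

lemma sullivanVertex_of_ncard_neighborSet_le (hD : Orients D G) {v : V}
    (hv : (G.neighborSet v).ncard ≤ (outNbr2 D v).ncard) : SullivanVertex D v :=
  (Set.ncard_le_ncard (hD.inNbr_subset_neighborSet v)).trans hv

end Orients

lemma Nat.three_mul_ceil_div_three_le (n : ℕ) : 3 * ⌈(n : ℝ) / 3⌉₊ ≤ n + 2 := by
  have h : (⌈(n : ℝ) / 3⌉₊ : ℝ) < n / 3 + 1 := Nat.ceil_lt_add_one (by positivity)
  have h' : ((3 * ⌈(n : ℝ) / 3⌉₊ : ℕ) : ℝ) < (n + 3 : ℕ) := by push_cast; linarith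
  exact Nat.lt_succ_iff.1 (by exact_mod_cast h')

theorem Orients.exists_lt_ncard_outNbr2 [Fintype V] (hD : Orients D G) {d : ℝ} (hd : 0 < d)
    (hV : 3 ≤ Fintype.card V)
    (hcod : ∀ u v, u ≠ v → ((G.commonNeighbors u v).ncard : ℝ) ≤ d / 2400)
    (hdeg : ∀ v, ((G.neighborSet v).ncard : ℝ) ≤ 4 * d)
    (hdense : ∀ A : Finset V, #A = ⌈(Fintype.card V : ℝ) / 3⌉₊ →
      Fintype.card V * d / 25 ≤ (eIn G A : ℝ)) :
    ∃ v, 4 * d < ((outNbr2 D v).ncard : ℝ) := by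
  by_contra! hN2
  set n := Fintype.card V
  set m := ⌈(n : ℝ) / 3⌉₊
  have hK (v : V) : ∑ u ∈ (outNbr D v).toFinset, ((outNbr D u).ncard : ℝ) ≤ d ^ 2 / 400 :=
    (hD.sum_ncard_outNbr_le (by positivity) hcod (hdeg v) (hN2 v)).trans_eq (by ring)
  -- `d/15` works since `25 (d²/400) / d = d/16 < d/15 < 9d/125 ≤ 3nd / (25 (n + 2))`
  set B : Finset V := {u | d / 15 ≤ (outNbr D u).ncard}
  have hB : ∑ b ∈ B, ((inNbr D b).ncard : ℝ) ≤ n * (3 * d / 80) :=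
    (hD.sum_ncard_inNbr_le (by positivity) hK).trans_eq (by field_simp; ring)
  have hm : 3 * m ≤ n + 2 := Nat.three_mul_ceil_div_three_le n
  have hmR : 3 * (m : ℝ) ≤ n + 2 := by exact_mod_cast hm
  have hn : (3 : ℝ) ≤ n := by exact_mod_cast hV
  rcases le_or_gt m #Bᶜ with hsmall | hlarge
  · obtain ⟨A, hAB, hAm⟩ := exists_subset_card_eq hsmall
    have hA : (eIn G A : ℝ) ≤ m * (d / 15) := by
      rw [← hAm, ← nsmul_eq_mul]
      refine (Nat.cast_le.2 (hD.eIn_le_sum_ncard_outNbr A)).trans ?_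
      push_cast
      exact sum_le_card_nsmul _ _ _ fun a ha => (by simpa [B] using hAB ha : _ < _).le
    nlinarith [hdense A hAm]
  · obtain ⟨A, hAB, hAm⟩ := exists_subset_card_eq (show m ≤ #B by
      have := card_compl_add_card B
      omega)
    have hA : (eIn G A : ℝ) ≤ ∑ b ∈ B, ((inNbr D b).ncard : ℝ) := by
      refine (Nat.cast_le.2 (hD.eIn_le_sum_ncard_inNbr A)).trans ?_
      push_cast
      exact sum_le_sum_of_subset_of_nonneg hAB fun _ _ _ => by positivity
    nlinarith [hdense A hAm]

/-- let `n ≥ 3` and `d > 0`, and let `G` be an `n`-vertex graph in which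
(a) any two distinct vertices are joined by fewer than `d/2400` paths of length 2,
(b) all degrees are at most `4d`, and (c) every set of `⌈n/3⌉` vertices induces at least
`nd/25` edges. Then every orientation of `G` has a vertex `v` with `|N2(v)| > 4d`;
in particular, every orientation of `G` has a Sullivan vertex. -/
theorem stmt_16 (n : ℕ) (hn : 3 ≤ n) (d : ℝ) (hd : 0 < d)
    (G : SimpleGraph (Fin n))
    (ha : ∀ u v : Fin n, u ≠ v →
      (({w | w ≠ u ∧ w ≠ v ∧ G.Adj u w ∧ G.Adj w v}).ncard : ℝ) < d / 2400)
    (hb : ∀ v, ((G.neighborSet v).ncard : ℝ) ≤ 4 * d)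
    (hc : ∀ A : Set (Fin n), A.ncard = ⌈(n : ℝ) / 3⌉₊ →
      (n : ℝ) * d / 25 ≤ (eIn G A : ℝ)) :
    ∀ D : Fin n → Fin n → Prop, Orients D G →
      (∃ v, 4 * d < ((outNbr2 D v).ncard : ℝ)) ∧ (∃ v, SullivanVertex D v) := by
  intro D hD
  obtain ⟨v, hv⟩ := hD.exists_lt_ncard_outNbr2 hd (by simpa using hn)
    (fun u w huw => by simpa [SimpleGraph.setOf_adj_adj_eq_commonNeighbors] using (ha u w huw).le)
    hb (fun A hA => by simpa using hc A (by simpa using hA))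
  exact ⟨⟨v, hv⟩, v,
    hD.sullivanVertex_of_ncard_neighborSet_le (by exact_mod_cast (hb v).trans hv.le)⟩
end

section
/- Let ε ∈ (0,1), set δ := ε/5, let p ∈ (0,1), let n and k be positive integers with k ≤ δnp²/2, and let G be a simple graph on n vertices such that: every vertex of G has degree at most (1+δ)np, and for every pair of disjoint vertex sets A, B ⊆ V(G) with |A| ≥ k and |B| ≥ np², one has e(A,B) ≤ (1+δ)|A||B|p. Let G⃗ be an orientation of G and let v be a vertex with d⁺(v) ≥ (1+ε)np² such that the set {u ∈ N1(v) : d⁺(u) ≥ d⁺(v)} has size at least k. Then v is a Sullivan vertex of G⃗. -/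
open Filter

set_option maxHeartbeats 1000000 in
/-- under the stated degree and cross-edge upper bounds on the `n`-vertex
graph `G` (with `δ = ε/5` and `k ≤ δnp²/2`), in any orientation of `G` a vertex `v` with
`d⁺(v) ≥ (1+ε)np²` having at least `k` outneighbours of outdegree at least `d⁺(v)` is a
Sullivan vertex. -/
theorem stmt_18 (ε : ℝ) (hε0 : 0 < ε) (hε1 : ε < 1)
    (δ : ℝ) (hδ : δ = ε / 5) (p : ℝ) (hp0 : 0 < p) (hp1 : p < 1)
    (n k : ℕ) (hn : 0 < n) (hk : 0 < k) (hkb : (k : ℝ) ≤ δ * n * p^2 / 2)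
    (G : SimpleGraph (Fin n))
    (hdeg : ∀ v, ((G.neighborSet v).ncard : ℝ) ≤ (1 + δ) * n * p)
    (hAB : ∀ A B : Set (Fin n), Disjoint A B → (k : ℝ) ≤ (A.ncard : ℝ) →
      (n : ℝ) * p^2 ≤ (B.ncard : ℝ) →
      (eBtw G A B : ℝ) ≤ (1 + δ) * A.ncard * B.ncard * p)
    (D : Fin n → Fin n → Prop) (hD : Orients D G) (v : Fin n)
    (hdv : (1 + ε) * n * p^2 ≤ ((outNbr D v).ncard : ℝ))
    (hbig : (k : ℝ) ≤
      (({u ∈ outNbr D v | (outNbr D v).ncard ≤ (outNbr D u).ncard}).ncard : ℝ)) :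
    SullivanVertex D v := by
  classical
  obtain ⟨hOG, hAdj⟩ := hD
  by_contra hcon
  rw [SullivanVertex, not_le] at hcon
  set N1 : Set (Fin n) := outNbr D v with hN1def
  set N2 : Set (Fin n) := outNbr2 D v with hN2def
  set Nm : Set (Fin n) := inNbr D v with hNmdef
  have hkN : k ≤ {u ∈ N1 | N1.ncard ≤ (outNbr D u).ncard}.ncard := by exact_mod_cast hbig
  obtain ⟨S', hS'sub, hS'card⟩ := Set.exists_subset_card_eq hkN
  have hS'N1 : S' ⊆ N1 := fun u hu => (hS'sub hu).1
  have hout : ∀ u ∈ S', N1.ncard ≤ (outNbr D u).ncard := fun u hu => (hS'sub hu).2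
  set B : Set (Fin n) := (N1 \ S') ∪ N2 with hBdef
  -- all out-arcs from S' land in S' ∪ B
  have harc : ∀ u ∈ S', ∀ w ∈ outNbr D u, w ∈ S' ∪ B := by
    intro u hu w hw
    obtain ⟨hwu, hDuw⟩ := hw
    have huN1 : u ∈ N1 := hS'N1 hu
    by_cases hwS : w ∈ S'
    · exact Or.inl hwS
    by_cases hwN1 : w ∈ N1
    · exact Or.inr (Or.inl ⟨hwN1, hwS⟩)
    · refine Or.inr (Or.inr ⟨?_, u, huN1, hDuw⟩)
      intro hmem
      rcases Set.mem_insert_iff.mp hmem with hvv | h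
      · exact hOG u v (hvv ▸ hDuw) huN1.2
      · exact hwN1 h
  -- counting: k * |N1| ≤ k*k + eBtw G S' B
  set T : Finset (Fin n × Fin n) :=
    (S'.toFinite.toFinset).biUnion
      (fun u => ((outNbr D u).toFinite.toFinset).image (fun w => (u, w))) with hTdef
  have hTcard : k * N1.ncard ≤ T.card := by
    rw [hTdef, Finset.card_biUnion]
    · calc k * N1.ncard
          = ∑ _u ∈ S'.toFinite.toFinset, N1.ncard := by
            rw [Finset.sum_const, ← Set.ncard_eq_toFinset_card _ S'.toFinite, hS'card,
              smul_eq_mul]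
        _ ≤ ∑ u ∈ S'.toFinite.toFinset,
              (((outNbr D u).toFinite.toFinset).image (fun w => (u, w))).card := by
            apply Finset.sum_le_sum
            intro u hu
            rw [Finset.card_image_of_injective _ (fun a b h => congrArg Prod.snd h),
              ← Set.ncard_eq_toFinset_card _ (outNbr D u).toFinite]
            exact hout u (S'.toFinite.mem_toFinset.mp hu)
    · intro a _ b _ hab
      simp only [Finset.disjoint_left, Finset.mem_image]
      rintro x ⟨w1, _, rfl⟩ ⟨w2, _, h2⟩
      exact hab (congrArg Prod.fst h2).symm
  have hTle : T.card ≤ k * k +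
      {q : Fin n × Fin n | q.1 ∈ S' ∧ q.2 ∈ B ∧ G.Adj q.1 q.2}.ncard := by
    set P : Set (Fin n × Fin n) := {q : Fin n × Fin n | q.1 ∈ S' ∧ q.2 ∈ B ∧ G.Adj q.1 q.2}
      with hPdef
    have hTsub : T ⊆ (S'.toFinite.toFinset ×ˢ S'.toFinite.toFinset) ∪ P.toFinite.toFinset := by
      intro q hq
      simp only [hTdef, Finset.mem_biUnion, Finset.mem_image,
        Set.Finite.mem_toFinset] at hq
      obtain ⟨u, hu, w, hw, rfl⟩ := hq
      rcases harc u hu w hw with h | h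
      · exact Finset.mem_union_left _ (Finset.mem_product.mpr
          ⟨S'.toFinite.mem_toFinset.mpr hu, S'.toFinite.mem_toFinset.mpr h⟩)
      · exact Finset.mem_union_right _ (P.toFinite.mem_toFinset.mpr
          ⟨hu, h, (hAdj u w).mpr (Or.inl hw.2)⟩)
    calc T.card ≤ ((S'.toFinite.toFinset ×ˢ S'.toFinite.toFinset) ∪ P.toFinite.toFinset).card :=
          Finset.card_le_card hTsub
      _ ≤ (S'.toFinite.toFinset ×ˢ S'.toFinite.toFinset).card + (P.toFinite.toFinset).card :=
          Finset.card_union_le _ _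
      _ = k * k + P.ncard := by
          rw [Finset.card_product, ← Set.ncard_eq_toFinset_card _ S'.toFinite, hS'card,
            ← Set.ncard_eq_toFinset_card _ P.toFinite]
  have hmain : k * N1.ncard ≤ k * k + eBtw G S' B := hTcard.trans hTle
  -- apply hAB
  have hN1k : k ≤ N1.ncard := hS'card ▸ Set.ncard_le_ncard hS'N1 N1.toFinite
  have hdiffcard : ((N1 \ S').ncard : ℝ) = (N1.ncard : ℝ) - k := by
    rw [Set.ncard_diff hS'N1 S'.toFinite, Nat.cast_sub (hS'card ▸ hN1k), hS'card]
  have hdisjSB : Disjoint S' B := by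
    rw [hBdef, Set.disjoint_union_right]
    refine ⟨Set.disjoint_sdiff_right, Set.disjoint_left.mpr fun u huS' huN2 => ?_⟩
    exact huN2.1 (Set.mem_insert_of_mem _ (hS'N1 huS'))
  have hnp2 : (0:ℝ) < (n:ℝ) * p ^ 2 := by positivity
  have hBsize : (n : ℝ) * p ^ 2 ≤ (B.ncard : ℝ) := by
    have h1 : ((N1 \ S').ncard : ℝ) ≤ (B.ncard : ℝ) := by
      exact_mod_cast Set.ncard_le_ncard Set.subset_union_left B.toFinite
    rw [hdiffcard] at h1
    nlinarith [hdv, hkb, hε0, hε1]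
  have hk' : (k : ℝ) ≤ (S'.ncard : ℝ) := by rw [hS'card]
  have hABres := hAB S' B hdisjSB hk' hBsize
  have hBcard : (B.ncard : ℝ) ≤ ((N1.ncard : ℝ) - k) + (N2.ncard : ℝ) := by
    have := Set.ncard_union_le (N1 \ S') N2
    have h2 : ((B.ncard : ℕ) : ℝ) ≤ ((N1 \ S').ncard : ℝ) + (N2.ncard : ℝ) := by
      exact_mod_cast this
    rw [hdiffcard] at h2
    linarith
  -- degree bound at v
  have hNdisj : Disjoint N1 Nm := Set.disjoint_left.mpr fun w hw1 hwm => hOG v w hw1.2 hwm.2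
  have hsubnbr : N1 ∪ Nm ⊆ G.neighborSet v := by
    rintro w (hw | hw)
    · exact (hAdj v w).mpr (Or.inl hw.2)
    · exact (hAdj v w).mpr (Or.inr hw.2)
  have hdegv : (N1.ncard : ℝ) + (Nm.ncard : ℝ) ≤ (1 + δ) * n * p := by
    have h1 : (N1 ∪ Nm).ncard = N1.ncard + Nm.ncard :=
      Set.ncard_union_eq hNdisj N1.toFinite Nm.toFinite
    have h2 : (N1 ∪ Nm).ncard ≤ (G.neighborSet v).ncard :=
      Set.ncard_le_ncard hsubnbr (G.neighborSet v).toFinite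
    have h3 := hdeg v
    rw [h1] at h2
    have h2' : ((N1.ncard + Nm.ncard : ℕ) : ℝ) ≤ ((G.neighborSet v).ncard : ℝ) := by
      exact_mod_cast h2
    push_cast at h2'
    linarith
  -- final arithmetic
  have hkpos : (0:ℝ) < (k:ℝ) := by exact_mod_cast hk
  have hdelta : (0:ℝ) < δ := by rw [hδ]; linarith
  have hsr : (N2.ncard : ℝ) < (Nm.ncard : ℝ) := by exact_mod_cast hcon
  have hchainR : (k:ℝ) * (N1.ncard : ℝ) ≤ (k:ℝ) * k + (1 + δ) * k * (((N1.ncard:ℝ) - k) + N2.ncard) * p := by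
    have h1 : ((k * N1.ncard : ℕ) : ℝ) ≤ ((k * k + eBtw G S' B : ℕ) : ℝ) := by
      exact_mod_cast hmain
    push_cast at h1
    have h2 : (1 + δ) * (S'.ncard:ℝ) * B.ncard * p ≤
        (1 + δ) * k * (((N1.ncard:ℝ) - k) + N2.ncard) * p := by
      rw [hS'card]
      have hq0 : (0:ℝ) < (1 + δ) * (k:ℝ) * p := by
        apply mul_pos (mul_pos _ hkpos) hp0; linarith [hdelta]
      linarith [mul_le_mul_of_nonneg_left hBcard hq0.le,
        (by ring : (1 + δ) * (k:ℝ) * p * (B.ncard:ℝ) = (1 + δ) * (k:ℝ) * (B.ncard:ℝ) * p),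
        (by ring : (1 + δ) * (k:ℝ) * p * (((N1.ncard:ℝ) - k) + (N2.ncard:ℝ)) =
          (1 + δ) * (k:ℝ) * (((N1.ncard:ℝ) - k) + (N2.ncard:ℝ)) * p)]
    linarith [hABres]
  have hq : (0:ℝ) < (1 + δ) * p := by
    apply mul_pos _ hp0; linarith [hdelta]
  have h6 : (N1.ncard:ℝ) ≤ (k:ℝ) + (1 + δ) * (((N1.ncard:ℝ) - k) + N2.ncard) * p := by
    have heq : (k:ℝ) * k + (1 + δ) * (k:ℝ) * (((N1.ncard:ℝ) - k) + N2.ncard) * p =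
        (k:ℝ) * ((k:ℝ) + (1 + δ) * (((N1.ncard:ℝ) - k) + N2.ncard) * p) := by ring
    exact le_of_mul_le_mul_left (hchainR.trans_eq heq) hkpos
  have st1 : (1 + δ) * (((N1.ncard:ℝ) - k) + (N2.ncard:ℝ)) * p ≤
      (1 + δ) * (((N1.ncard:ℝ) - k) + (Nm.ncard:ℝ)) * p := by
    have h := mul_le_mul_of_nonneg_left hsr.le hq.le
    nlinarith [h]
  have st2 : (1 + δ) * (((N1.ncard:ℝ) - k) + (Nm.ncard:ℝ)) * p ≤
      (1 + δ) * ((1 + δ) * n * p - k) * p := by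
    have h1 : (N1.ncard:ℝ) - k + (Nm.ncard:ℝ) ≤ (1 + δ) * n * p - k := by linarith [hdegv]
    have h := mul_le_mul_of_nonneg_left h1 hq.le
    nlinarith [h]
  have st3 : (1 + δ) * ((1 + δ) * n * p - k) * p ≤ (1 + δ) * ((1 + δ) * n * p) * p := by
    have hkq : (0:ℝ) ≤ (1 + δ) * k * p := by
      apply mul_nonneg (mul_nonneg _ hkpos.le) hp0.le; linarith [hdelta]
    nlinarith [hkq]
  have st4 : (N1.ncard:ℝ) ≤ (k:ℝ) + (1 + δ) * ((1 + δ) * n * p) * p := by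
    linarith [h6, st1, st2, st3]
  rw [hδ] at st4 hkb
  nlinarith [st4, hdv, hkb, hnp2, hε0, hε1, mul_pos hε0 hnp2,
    mul_pos (mul_pos hε0 hε0) hnp2]
end

section
/- Let δ ∈ (0, 1/2), p ∈ (0,1), and let n be a positive integer with δn ≥ n^{3/4}. Let G be a simple graph on n vertices equipped with an orientation G⃗ such that: the total number of edges of G is at least (1−δ)n²p/2; for every vertex set B ⊆ V(G) with |B| ≥ δn, e(B) ≤ (1+δ)·C(|B|,2)·p; and for every pair of disjoint vertex sets A, B ⊆ V(G) with |A|, |B| ≥ n^{3/4}, e(A,B) ≤ (1+δ)|A||B|p. Then for every α ∈ [δ, 1−δ] and every β ∈ [0, ((1+δ)/(1+3δ))·(α/2) − δ/((1+3δ)α)] (with αn an integer), there is no set A ⊆ V(G) with |A| ≥ αn such that every vertex v ∈ A has outdegree d⁺(v) < (1+3δ)βnp in G⃗. -/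
open Filter

/-!
Suppose `A` has at least `αn` vertices of outdegree below `(1+3δ)βnp`; shrink it to exactly
`m = αn` vertices. Every edge lies inside `A`, inside `Aᶜ`, or between them. Charging each edge
inside `A` to its tail gives `e(A) < m(1+3δ)βnp`, while the density hypotheses bound
`e(Aᶜ) + e(A, Aᶜ)` by `(1+δ)((n-m)²/2 + m(n-m))p`. The choice of `β` makes the total fall short
of `(1-δ)n²p/2`, contradicting the lower bound on the number of edges.
-/

section EdgeCounting

variable {V : Type*} {G : SimpleGraph V}

lemma edgeSet_ncard_le_eIn_add_eIn_compl_add_eBtw [Finite V] (A : Set V) :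
    G.edgeSet.ncard ≤ eIn G A + eIn G Aᶜ + eBtw G A Aᶜ := by
  set P : Set (V × V) := {p | p.1 ∈ A ∧ p.2 ∈ Aᶜ ∧ G.Adj p.1 p.2}
  set E₁ : Set (Sym2 V) := {e | e ∈ G.edgeSet ∧ ∀ v ∈ e, v ∈ A}
  set E₂ : Set (Sym2 V) := {e | e ∈ G.edgeSet ∧ ∀ v ∈ e, v ∈ Aᶜ}
  have hcover : G.edgeSet ⊆ E₁ ∪ E₂ ∪ Function.uncurry Sym2.mk '' P := by
    intro e he
    induction e using Sym2.ind with
    | _ u v =>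
      have hadj : G.Adj u v := he
      by_cases hu : u ∈ A <;> by_cases hv : v ∈ A
      · exact .inl (.inl ⟨he, by simp [hu, hv]⟩)
      · exact .inr ⟨(u, v), ⟨hu, hv, hadj⟩, rfl⟩
      · exact .inr ⟨(v, u), ⟨hv, hu, hadj.symm⟩, Sym2.eq_swap⟩
      · exact .inl (.inr ⟨he, by simp [hu, hv]⟩)
  calc G.edgeSet.ncard ≤ (E₁ ∪ E₂ ∪ Function.uncurry Sym2.mk '' P).ncard :=
        Set.ncard_le_ncard hcover
    _ ≤ E₁.ncard + E₂.ncard + (Function.uncurry Sym2.mk '' P).ncard :=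
        (Set.ncard_union_le _ _).trans (Nat.add_le_add_right (Set.ncard_union_le _ _) _)
    _ ≤ E₁.ncard + E₂.ncard + P.ncard := Nat.add_le_add_left (Set.ncard_image_le P.toFinite) _

variable [Fintype V] {D : V → V → Prop}

lemma eIn_le_sum_ncard_outNbr (hD : Orients D G) (A : Finset V) :
    eIn G A ≤ ∑ v ∈ A, (outNbr D v).ncard := by
  classical
  set arcs := A.sigma fun v => (outNbr D v).toFinset
  have hcover : {e | e ∈ G.edgeSet ∧ ∀ v ∈ e, v ∈ (A : Set V)} ⊆
      ↑(arcs.image fun a => s(a.1, a.2)) := by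
    intro e he
    induction e using Sym2.ind with
    | _ u v =>
      obtain ⟨hadj, hmem⟩ := he
      have hadj : G.Adj u v := hadj
      have hu : u ∈ A := hmem u (Sym2.mem_mk_left u v)
      have hv : v ∈ A := hmem v (Sym2.mem_mk_right u v)
      simp only [Finset.coe_image, Set.mem_image, Finset.mem_coe, arcs, Finset.mem_sigma,
        Set.mem_toFinset]
      rcases (hD.2 u v).mp hadj with huv | hvu
      · exact ⟨⟨u, v⟩, ⟨hu, hadj.ne', huv⟩, rfl⟩
      · exact ⟨⟨v, u⟩, ⟨hv, hadj.ne, hvu⟩, Sym2.eq_swap⟩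
  calc eIn G A ≤ (arcs.image fun a => s(a.1, a.2)).card :=
        (Set.ncard_le_ncard hcover).trans_eq (Set.ncard_coe_finset _)
    _ ≤ arcs.card := Finset.card_image_le
    _ = ∑ v ∈ A, (outNbr D v).ncard := by
        simp only [arcs, Finset.card_sigma, Set.ncard_eq_toFinset_card']

lemma eIn_lt_ncard_mul_of_forall_ncard_outNbr_lt (hD : Orients D G) {A : Set V}
    (hA : A.Nonempty) {d : ℝ} (hout : ∀ v ∈ A, ((outNbr D v).ncard : ℝ) < d) :
    (eIn G A : ℝ) < A.ncard * d := by
  obtain ⟨s, rfl⟩ := A.toFinite.exists_finset_coe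
  calc (eIn G s : ℝ) ≤ ∑ v ∈ s, ((outNbr D v).ncard : ℝ) := by
        exact_mod_cast eIn_le_sum_ncard_outNbr hD s
    _ < ∑ _v ∈ s, d := Finset.sum_lt_sum_of_nonempty (by simpa using hA) hout
    _ = (s : Set V).ncard * d := by simp

end EdgeCounting

lemma cast_choose_two_le_sq_div_two (k : ℕ) : (k.choose 2 : ℝ) ≤ (k : ℝ) ^ 2 / 2 := by
  rw [Nat.cast_choose_two]
  nlinarith [(k.cast_nonneg : (0 : ℝ) ≤ k)]

lemma edge_budget_le {δ α β p n m : ℝ} (hδ : 0 < δ) (hα : 0 < α) (hp : 0 ≤ p)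
    (hβ : β ≤ (1 + δ)/(1 + 3*δ) * (α/2) - δ/((1 + 3*δ) * α)) (hm : m = α * n) :
    m * ((1 + 3*δ) * β * n * p) + (1 + δ) * ((n - m)^2 / 2) * p + (1 + δ) * m * (n - m) * p
      ≤ (1 - δ) * n^2 * p / 2 := by
  have hβα : (1 + 3*δ) * β * α ≤ (1 + δ) * α^2 / 2 - δ := by
    have hpos : 0 < (1 + 3*δ) * α := by positivity
    calc (1 + 3*δ) * β * α = ((1 + 3*δ) * α) * β := by ring
      _ ≤ ((1 + 3*δ) * α) * ((1 + δ)/(1 + 3*δ) * (α/2) - δ/((1 + 3*δ) * α)) :=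
          mul_le_mul_of_nonneg_left hβ hpos.le
      _ = (1 + δ) * α^2 / 2 - δ := by field_simp
  subst hm
  nlinarith [mul_le_mul_of_nonneg_right hβα (by positivity : (0 : ℝ) ≤ n^2 * p)]

theorem stmt_19_general (δ : ℝ) (hδ0 : 0 < δ)
    (p : ℝ) (hp0 : 0 < p)
    (n : ℕ) (hn0 : 0 < n) (hn : (n : ℝ) ^ ((3 : ℝ)/4) ≤ δ * n)
    (G : SimpleGraph (Fin n)) (D : Fin n → Fin n → Prop) (hD : Orients D G)
    (htot : (1 - δ) * n^2 * p / 2 ≤ (G.edgeSet.ncard : ℝ))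
    (hin : ∀ B : Set (Fin n), δ * n ≤ (B.ncard : ℝ) →
      (eIn G B : ℝ) ≤ (1 + δ) * (Nat.choose B.ncard 2 : ℝ) * p)
    (hAB : ∀ A B : Set (Fin n), Disjoint A B → (n : ℝ) ^ ((3 : ℝ)/4) ≤ (A.ncard : ℝ) →
      (n : ℝ) ^ ((3 : ℝ)/4) ≤ (B.ncard : ℝ) →
      (eBtw G A B : ℝ) ≤ (1 + δ) * A.ncard * B.ncard * p) :
    ∀ α β : ℝ, α ∈ Set.Icc δ (1 - δ) →
      β ∈ Set.Icc (0 : ℝ) ((1 + δ)/(1 + 3*δ) * (α/2) - δ/((1 + 3*δ) * α)) →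
      (∃ m : ℕ, (m : ℝ) = α * n) →
      ¬ ∃ A : Set (Fin n), α * n ≤ (A.ncard : ℝ) ∧
        ∀ v ∈ A, ((outNbr D v).ncard : ℝ) < (1 + 3*δ) * β * n * p := by
  rintro α β ⟨hδα, hα1⟩ ⟨-, hβ⟩ ⟨m, hm⟩ ⟨A₀, hA₀, hout⟩
  obtain ⟨A, hAA₀, hA⟩ :=
    Set.exists_subset_card_eq (show m ≤ A₀.ncard by exact_mod_cast hm ▸ hA₀)
  have hmn : m ≤ n := by exact_mod_cast (hm.trans_le (by nlinarith) : (m : ℝ) ≤ n)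
  have hAc : (Aᶜ.ncard : ℝ) = n - m := by
    rw [Set.ncard_compl, hA, Nat.card_eq_fintype_card, Fintype.card_fin, Nat.cast_sub hmn]
  have hδm : δ * n ≤ (A.ncard : ℝ) := by rw [hA, hm]; nlinarith
  have hδAc : δ * n ≤ (Aᶜ.ncard : ℝ) := by rw [hAc, hm]; nlinarith
  have hAne : A.Nonempty := Set.nonempty_of_ncard_ne_zero fun h => by
    rw [h, Nat.cast_zero] at hδm
    exact hδm.not_gt (mul_pos hδ0 (Nat.cast_pos.mpr hn0))
  have hinA := eIn_lt_ncard_mul_of_forall_ncard_outNbr_lt hD hAne fun v hv => hout v (hAA₀ hv)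
  have hinAc : (eIn G Aᶜ : ℝ) ≤ (1 + δ) * ((n - m)^2 / 2) * p := by
    refine (hin Aᶜ hδAc).trans ?_
    gcongr
    simpa [hAc] using cast_choose_two_le_sq_div_two Aᶜ.ncard
  have hbtw := hAB A Aᶜ disjoint_compl_right (hn.trans hδm) (hn.trans hδAc)
  have hsplit : (G.edgeSet.ncard : ℝ) ≤ eIn G A + eIn G Aᶜ + eBtw G A Aᶜ := by
    exact_mod_cast edgeSet_ncard_le_eIn_add_eIn_compl_add_eBtw A
  rw [hA] at hinA
  rw [hA, hAc] at hbtw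
  linarith [edge_budget_le hδ0 (hδ0.trans_le hδα) hp0.le hβ hm]

/-- under the stated edge-count conditions on the oriented `n`-vertex graph
(with `δn ≥ n^{3/4}`), for all admissible `α` and `β` (with `αn ∈ ℕ`) there is no set `A`
of at least `αn` vertices all of whose vertices have outdegree less than `(1+3δ)βnp`. -/
theorem stmt_19 (δ : ℝ) (hδ0 : 0 < δ) (hδ1 : δ < 1/2)
    (p : ℝ) (hp0 : 0 < p) (hp1 : p < 1)
    (n : ℕ) (hn0 : 0 < n) (hn : (n : ℝ) ^ ((3 : ℝ)/4) ≤ δ * n)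
    (G : SimpleGraph (Fin n)) (D : Fin n → Fin n → Prop) (hD : Orients D G)
    (htot : (1 - δ) * n^2 * p / 2 ≤ (G.edgeSet.ncard : ℝ))
    (hin : ∀ B : Set (Fin n), δ * n ≤ (B.ncard : ℝ) →
      (eIn G B : ℝ) ≤ (1 + δ) * (Nat.choose B.ncard 2 : ℝ) * p)
    (hAB : ∀ A B : Set (Fin n), Disjoint A B → (n : ℝ) ^ ((3 : ℝ)/4) ≤ (A.ncard : ℝ) →
      (n : ℝ) ^ ((3 : ℝ)/4) ≤ (B.ncard : ℝ) →
      (eBtw G A B : ℝ) ≤ (1 + δ) * A.ncard * B.ncard * p) :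
    ∀ α β : ℝ, α ∈ Set.Icc δ (1 - δ) →
      β ∈ Set.Icc (0 : ℝ) ((1 + δ)/(1 + 3*δ) * (α/2) - δ/((1 + 3*δ) * α)) →
      (∃ m : ℕ, (m : ℝ) = α * n) →
      ¬ ∃ A : Set (Fin n), α * n ≤ (A.ncard : ℝ) ∧
        ∀ v ∈ A, ((outNbr D v).ncard : ℝ) < (1 + 3*δ) * β * n * p :=
  stmt_19_general δ hδ0 p hp0 n hn0 hn G D hD htot hin hAB
end
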